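/- arXiv:0707.1318 — 14 statements merged into one kernel-verified Lean document; each statement's English description precedes it below -/
import Mathlib

section
/- Let n ≥ 3, let A : ZMod n → EuclideanSpace ℝ (Fin 3) be a (not necessarily planar) closed n-gon with A i ≠ A (i+1) for all i, and let P be a point with P ≠ A i for all i. Then the sum of the apex angles of the pyramid with tip P is dominated by the sum of the external angles of the polygon: ∑ i, ∠ (A i) P (A (i+1)) ≤ ∑ i, (π − ∠ (A (i−1)) (A i) (A (i+1))). -/
/-! Each lateral face `P (A i) (A (i+1))` is a triangle, so its apex angle is `π` minus its two
base angles. Regrouping the base angles by the vertex `A i` they sit at, the apex-angle sum is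
`∑ i, (π - ∠ (A (i-1)) (A i) P - ∠ P (A i) (A (i+1)))`, and by the triangle inequality for angles
at `A i` each summand is at most the external angle `π - ∠ (A (i-1)) (A i) (A (i+1))`. -/

open Real EuclideanGeometry

section

variable {V Pt : Type*} [NormedAddCommGroup V] [InnerProductSpace ℝ V] [MetricSpace Pt]
  [NormedAddTorsor V Pt]

lemma angle_eq_pi_sub_angle_sub_angle {a b p : Pt} (h : p ≠ a) :
    ∠ a p b = π - ∠ p b a - ∠ b a p := by
  linarith [angle_add_angle_add_angle_eq_pi b h]

lemma sum_apex_angles_eq_sum_pi_sub_base_angles {ι : Type*} [Fintype ι] [AddGroupWithOne ι]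
    (A : ι → Pt) (P : Pt) (hP : ∀ i, P ≠ A i) :
    ∑ i, ∠ (A i) P (A (i + 1)) = ∑ i, (π - ∠ (A (i - 1)) (A i) P - ∠ P (A i) (A (i + 1))) := by
  have hshift : ∑ i, ∠ P (A (i + 1)) (A i) = ∑ i, ∠ (A (i - 1)) (A i) P :=
    Fintype.sum_equiv (Equiv.addRight 1) _ _ fun i => by simp [angle_comm P]
  simp only [angle_eq_pi_sub_angle_sub_angle (hP _), Finset.sum_sub_distrib, hshift]
  simp only [angle_comm (A (_ + 1)) (A _) P]

end

theorem sum_apex_angles_le_sum_external_angles_general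
    (n : ℕ) [NeZero n]
    (A : ZMod n → EuclideanSpace ℝ (Fin 3)) (P : EuclideanSpace ℝ (Fin 3))
    (hP : ∀ i, P ≠ A i) :
    ∑ i : ZMod n, ∠ (A i) P (A (i + 1)) ≤
      ∑ i : ZMod n, (π - ∠ (A (i - 1)) (A i) (A (i + 1))) := by
  rw [sum_apex_angles_eq_sum_pi_sub_base_angles A P hP]
  exact Finset.sum_le_sum fun i _ => by
    linarith [angle_le_angle_add_angle (A i) (A (i - 1)) P (A (i + 1))]

theorem sum_apex_angles_le_sum_external_angles
    (n : ℕ) (hn : 3 ≤ n) [NeZero n]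
    (A : ZMod n → EuclideanSpace ℝ (Fin 3)) (P : EuclideanSpace ℝ (Fin 3))
    (hA : ∀ i, A i ≠ A (i + 1)) (hP : ∀ i, P ≠ A i) :
    ∑ i : ZMod n, ∠ (A i) P (A (i + 1)) ≤
      ∑ i : ZMod n, (π - ∠ (A (i - 1)) (A i) (A (i + 1))) :=
  sum_apex_angles_le_sum_external_angles_general n A P hP
end

section
/- Let n ≥ 3, let A : ZMod n → EuclideanSpace ℝ (Fin 3), and let P be a point lying in the convex hull of the set of vertices {A i} with P ≠ A i for all i. Then the total angle subtended at P by the consecutive vertex pairs is at least 2π: ∑ i, ∠ (A i) P (A (i+1)) ≥ 2π. -/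
section Helpers

open Real InnerProductGeometry

variable {E : Type*} [NormedAddCommGroup E] [InnerProductSpace ℝ E]

local notation "⟪" x ", " y "⟫" => @inner ℝ _ _ x y

lemma gram_det_nonneg (x y z : E) :
    (⟪x, y⟫ * ⟪y, z⟫ - ⟪x, z⟫ * ⟪y, y⟫)^2
      ≤ (⟪x, x⟫ * ⟪y, y⟫ - ⟪x, y⟫ * ⟪x, y⟫) * (⟪y, y⟫ * ⟪z, z⟫ - ⟪y, z⟫ * ⟪y, z⟫) := by
  by_cases hy : y = 0
  · simp [hy]
  have hY : (0:ℝ) < ⟪y, y⟫ :=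
    lt_of_le_of_ne real_inner_self_nonneg (Ne.symm (inner_self_ne_zero.2 hy))
  have hpq := real_inner_mul_inner_self_le (⟪y, y⟫ • x - ⟪x, y⟫ • y) (⟪y, y⟫ • z - ⟪y, z⟫ • y)
  have e1 : ⟪⟪y, y⟫ • x - ⟪x, y⟫ • y, ⟪y, y⟫ • z - ⟪y, z⟫ • y⟫
      = ⟪y, y⟫ * (⟪y, y⟫ * ⟪x, z⟫ - ⟪x, y⟫ * ⟪y, z⟫) := by
    simp only [inner_sub_left, inner_sub_right, real_inner_smul_left, real_inner_smul_right]
    rw [real_inner_comm y x, real_inner_comm z y]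
    ring
  have e2 : ⟪⟪y, y⟫ • x - ⟪x, y⟫ • y, ⟪y, y⟫ • x - ⟪x, y⟫ • y⟫
      = ⟪y, y⟫ * (⟪x, x⟫ * ⟪y, y⟫ - ⟪x, y⟫ * ⟪x, y⟫) := by
    simp only [inner_sub_left, inner_sub_right, real_inner_smul_left, real_inner_smul_right]
    rw [real_inner_comm y x]
    ring
  have e3 : ⟪⟪y, y⟫ • z - ⟪y, z⟫ • y, ⟪y, y⟫ • z - ⟪y, z⟫ • y⟫
      = ⟪y, y⟫ * (⟪y, y⟫ * ⟪z, z⟫ - ⟪y, z⟫ * ⟪y, z⟫) := by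
    simp only [inner_sub_left, inner_sub_right, real_inner_smul_left, real_inner_smul_right]
    rw [real_inner_comm z y]
    ring
  rw [e1, e2, e3] at hpq
  have hY2 : (0:ℝ) < ⟪y, y⟫ * ⟪y, y⟫ := mul_pos hY hY
  refine le_of_mul_le_mul_left ?_ hY2
  nlinarith [hpq]

lemma my_angle_triangle (x y z : E) : angle x z ≤ angle x y + angle y z := by
  by_cases hy : y = 0
  · subst hy
    rw [angle_zero_left, angle_zero_right]
    linarith [angle_le_pi x z]
  by_cases hx : x = 0
  · subst hx
    rw [angle_zero_left, angle_zero_left]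
    linarith [angle_nonneg y z]
  by_cases hz : z = 0
  · subst hz
    rw [angle_zero_right, angle_zero_right]
    linarith [angle_nonneg x y]
  rcases le_or_gt π (angle x y + angle y z) with h | h
  · linarith [angle_le_pi x z]
  have hnx : (0:ℝ) < ‖x‖ := norm_pos_iff.2 hx
  have hny : (0:ℝ) < ‖y‖ := norm_pos_iff.2 hy
  have hnz : (0:ℝ) < ‖z‖ := norm_pos_iff.2 hz
  have hca := cos_angle_mul_norm_mul_norm x y
  have hcb := cos_angle_mul_norm_mul_norm y z
  have hsa := sin_angle_mul_norm_mul_norm x y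
  have hsb := sin_angle_mul_norm_mul_norm y z
  have hA : (0:ℝ) ≤ ⟪x, x⟫ * ⟪y, y⟫ - ⟪x, y⟫ * ⟪x, y⟫ := by
    have := real_inner_mul_inner_self_le x y; linarith
  have hB : (0:ℝ) ≤ ⟪y, y⟫ * ⟪z, z⟫ - ⟪y, z⟫ * ⟪y, z⟫ := by
    have := real_inner_mul_inner_self_le y z; linarith
  have hgram := gram_det_nonneg x y z
  -- key: product of the two square roots dominates a*b - c*Y
  have hsq : ⟪x, y⟫ * ⟪y, z⟫ - ⟪x, z⟫ * ⟪y, y⟫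
      ≤ √(⟪x, x⟫ * ⟪y, y⟫ - ⟪x, y⟫ * ⟪x, y⟫) * √(⟪y, y⟫ * ⟪z, z⟫ - ⟪y, z⟫ * ⟪y, z⟫) := by
    rw [← Real.sqrt_mul hA]
    calc ⟪x, y⟫ * ⟪y, z⟫ - ⟪x, z⟫ * ⟪y, y⟫
        ≤ |⟪x, y⟫ * ⟪y, z⟫ - ⟪x, z⟫ * ⟪y, y⟫| := le_abs_self _
      _ = √((⟪x, y⟫ * ⟪y, z⟫ - ⟪x, z⟫ * ⟪y, y⟫)^2) := (Real.sqrt_sq_eq_abs _).symm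
      _ ≤ _ := Real.sqrt_le_sqrt hgram
  have hY : ⟪y, y⟫ = ‖y‖ * ‖y‖ := real_inner_self_eq_norm_mul_norm y
  -- cos (α+β) * (‖x‖‖z‖) ≤ ⟪x,z⟫
  have hkey : Real.cos (angle x y + angle y z) * (‖x‖ * ‖z‖) ≤ ⟪x, z⟫ := by
    rw [Real.cos_add]
    have expand : (Real.cos (angle x y) * Real.cos (angle y z)
        - Real.sin (angle x y) * Real.sin (angle y z)) * (‖x‖ * ‖z‖) * (‖y‖ * ‖y‖)
        = (Real.cos (angle x y) * (‖x‖ * ‖y‖)) * (Real.cos (angle y z) * (‖y‖ * ‖z‖))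
          - (Real.sin (angle x y) * (‖x‖ * ‖y‖)) * (Real.sin (angle y z) * (‖y‖ * ‖z‖)) := by
      ring
    have h2 : (Real.cos (angle x y) * Real.cos (angle y z)
        - Real.sin (angle x y) * Real.sin (angle y z)) * (‖x‖ * ‖z‖) * (‖y‖ * ‖y‖)
        ≤ ⟪x, z⟫ * (‖y‖ * ‖y‖) := by
      rw [expand, hca, hcb, hsa, hsb, ← hY]
      nlinarith [hsq]
    have hyy : (0:ℝ) < ‖y‖ * ‖y‖ := by positivity
    exact le_of_mul_le_mul_right h2 hyy
  have hcos : Real.cos (angle x y + angle y z) ≤ ⟪x, z⟫ / (‖x‖ * ‖z‖) := by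
    rw [le_div_iff₀ (by positivity)]
    exact hkey
  have : angle x z = Real.arccos (⟪x, z⟫ / (‖x‖ * ‖z‖)) := rfl
  rw [this]
  by_contra hcon
  push_neg at hcon
  have h0 : (0:ℝ) ≤ angle x y + angle y z := add_nonneg (angle_nonneg x y) (angle_nonneg y z)
  have hle : Real.arccos (⟪x, z⟫ / (‖x‖ * ‖z‖)) ≤ π := Real.arccos_le_pi _
  have hlt := Real.cos_lt_cos_of_nonneg_of_le_pi h0 hle hcon
  have habs := abs_real_inner_div_norm_mul_norm_le_one x z
  rw [abs_le] at habs
  rw [Real.cos_arccos habs.1 habs.2] at hlt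
  linarith

lemma my_angle_merge {u v : E} (hu : u ≠ 0) (hv : v ≠ 0) {a b : ℝ} (ha : 0 ≤ a) (hb : 0 ≤ b)
    (hw : a • u + b • v ≠ 0) :
    angle u (a • u + b • v) + angle (a • u + b • v) v = angle u v := by
  set w := a • u + b • v with hwdef
  have hD : (0:ℝ) ≤ ⟪u, u⟫ * ⟪v, v⟫ - ⟪u, v⟫ * ⟪u, v⟫ := by
    have := real_inner_mul_inner_self_le u v; linarith
  have hW : (0:ℝ) < ⟪w, w⟫ :=
    lt_of_le_of_ne real_inner_self_nonneg (Ne.symm (inner_self_ne_zero.2 hw))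
  have hnu : (0:ℝ) < ‖u‖ := norm_pos_iff.2 hu
  have hnv : (0:ℝ) < ‖v‖ := norm_pos_iff.2 hv
  -- inner product expansions
  have euw : ⟪u, w⟫ = a * ⟪u, u⟫ + b * ⟪u, v⟫ := by
    simp only [hwdef, inner_add_right, real_inner_smul_right]
  have ewv : ⟪w, v⟫ = a * ⟪u, v⟫ + b * ⟪v, v⟫ := by
    simp only [hwdef, inner_add_left, real_inner_smul_left]
  have eww : ⟪w, w⟫ = a * a * ⟪u, u⟫ + 2 * (a * b) * ⟪u, v⟫ + b * b * ⟪v, v⟫ := by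
    simp only [hwdef, inner_add_left, inner_add_right, real_inner_smul_left,
      real_inner_smul_right]
    rw [real_inner_comm v u]
    ring
  have euu : ⟪u, u⟫ = ‖u‖ * ‖u‖ := real_inner_self_eq_norm_mul_norm u
  have evv : ⟪v, v⟫ = ‖v‖ * ‖v‖ := real_inner_self_eq_norm_mul_norm v
  have eww' : ⟪w, w⟫ = ‖w‖ * ‖w‖ := real_inner_self_eq_norm_mul_norm w
  have hca := cos_angle_mul_norm_mul_norm u w
  have hcb := cos_angle_mul_norm_mul_norm w v
  have hcg := cos_angle_mul_norm_mul_norm u v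
  have hsa := sin_angle_mul_norm_mul_norm u w
  have hsb := sin_angle_mul_norm_mul_norm w v
  have hsg := sin_angle_mul_norm_mul_norm u v
  -- simplify the square roots
  have rsa : √(⟪u, u⟫ * ⟪w, w⟫ - ⟪u, w⟫ * ⟪u, w⟫)
      = b * √(⟪u, u⟫ * ⟪v, v⟫ - ⟪u, v⟫ * ⟪u, v⟫) := by
    have : ⟪u, u⟫ * ⟪w, w⟫ - ⟪u, w⟫ * ⟪u, w⟫
        = b^2 * (⟪u, u⟫ * ⟪v, v⟫ - ⟪u, v⟫ * ⟪u, v⟫) := by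
      rw [euw, eww]; ring
    rw [this, Real.sqrt_mul (sq_nonneg b), Real.sqrt_sq hb]
  have rsb : √(⟪w, w⟫ * ⟪v, v⟫ - ⟪w, v⟫ * ⟪w, v⟫)
      = a * √(⟪u, u⟫ * ⟪v, v⟫ - ⟪u, v⟫ * ⟪u, v⟫) := by
    have : ⟪w, w⟫ * ⟪v, v⟫ - ⟪w, v⟫ * ⟪w, v⟫
        = a^2 * (⟪u, u⟫ * ⟪v, v⟫ - ⟪u, v⟫ * ⟪u, v⟫) := by
      rw [ewv, eww]; ring
    rw [this, Real.sqrt_mul (sq_nonneg a), Real.sqrt_sq ha]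
  rw [rsa] at hsa
  rw [rsb] at hsb
  set D := √(⟪u, u⟫ * ⟪v, v⟫ - ⟪u, v⟫ * ⟪u, v⟫) with hDdef
  have hDsq : D * D = ⟪u, u⟫ * ⟪v, v⟫ - ⟪u, v⟫ * ⟪u, v⟫ := Real.mul_self_sqrt hD
  set α := angle u w with hαdef
  set β := angle w v with hβdef
  set γ := angle u v with hγdef
  -- cos (α + β) = cos γ  and  sin (α + β) = sin γ
  have hM : (0:ℝ) < ‖u‖ * ‖v‖ * ⟪w, w⟫ := by positivity
  have hcos : Real.cos (α + β) = Real.cos γ := by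
    have key : Real.cos (α + β) * (‖u‖ * ‖v‖ * ⟪w, w⟫)
        = Real.cos γ * (‖u‖ * ‖v‖ * ⟪w, w⟫) := by
      rw [Real.cos_add]
      have lhs : (Real.cos α * Real.cos β - Real.sin α * Real.sin β) * (‖u‖ * ‖v‖ * ⟪w, w⟫)
          = (Real.cos α * (‖u‖ * ‖w‖)) * (Real.cos β * (‖w‖ * ‖v‖))
            - (Real.sin α * (‖u‖ * ‖w‖)) * (Real.sin β * (‖w‖ * ‖v‖)) := by
        rw [eww']; ring
      rw [lhs, hca, hcb, hsa, hsb, euw, ewv]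
      have rhs : Real.cos γ * (‖u‖ * ‖v‖ * ⟪w, w⟫) = (Real.cos γ * (‖u‖ * ‖v‖)) * ⟪w, w⟫ := by
        ring
      rw [rhs, hcg, eww]
      linear_combination (-(a * b)) * hDsq
    exact mul_right_cancel₀ (ne_of_gt hM) key
  have hsin : Real.sin (α + β) = Real.sin γ := by
    have key : Real.sin (α + β) * (‖u‖ * ‖v‖ * ⟪w, w⟫)
        = Real.sin γ * (‖u‖ * ‖v‖ * ⟪w, w⟫) := by
      rw [Real.sin_add]
      have lhs : (Real.sin α * Real.cos β + Real.cos α * Real.sin β) * (‖u‖ * ‖v‖ * ⟪w, w⟫)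
          = (Real.sin α * (‖u‖ * ‖w‖)) * (Real.cos β * (‖w‖ * ‖v‖))
            + (Real.cos α * (‖u‖ * ‖w‖)) * (Real.sin β * (‖w‖ * ‖v‖)) := by
        rw [eww']; ring
      rw [lhs, hsa, hcb, hca, hsb, euw, ewv]
      have rhs : Real.sin γ * (‖u‖ * ‖v‖ * ⟪w, w⟫) = (Real.sin γ * (‖u‖ * ‖v‖)) * ⟪w, w⟫ := by
        ring
      rw [rhs, hsg, eww]
      ring
    exact mul_right_cancel₀ (ne_of_gt hM) key
  -- now conclude α + β = γ
  have hα0 := angle_nonneg u w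
  have hαπ := angle_le_pi u w
  have hβ0 := angle_nonneg w v
  have hβπ := angle_le_pi w v
  have hγ0 := angle_nonneg u v
  have hγπ := angle_le_pi u v
  rcases le_or_gt (α + β) π with hle | hgt
  · exact Real.injOn_cos ⟨by linarith, hle⟩ ⟨hγ0, hγπ⟩ hcos
  rcases lt_or_eq_of_le (show α + β ≤ 2 * π by linarith) with h2 | h2
  · exfalso
    have hs : Real.sin (α + β) < 0 := by
      have : Real.sin (α + β - π) > 0 := Real.sin_pos_of_pos_of_lt_pi (by linarith) (by linarith)
      rw [Real.sin_sub_pi] at this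
      linarith
    have : (0:ℝ) ≤ Real.sin γ := Real.sin_nonneg_of_nonneg_of_le_pi hγ0 hγπ
    linarith
  · exfalso
    have hαpi : α = π := by linarith
    have hβpi : β = π := by linarith
    obtain ⟨-, r, hr, hwu⟩ := angle_eq_pi_iff.1 hαpi
    obtain ⟨-, s, hs, hvw⟩ := angle_eq_pi_iff.1 hβpi
    rw [hwu] at hvw
    -- v = (s * r) • u,  w = r • u,  w = a • u + b • v
    have hww : w = (a + b * (s * r)) • u := by
      rw [hwdef, hvw]; module
    rw [hwu] at hww
    have hru : (r - (a + b * (s * r))) • u = (0 : E) := by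
      rw [sub_smul, ← hww, sub_self]
    have hreq : r - (a + b * (s * r)) = 0 := (smul_eq_zero.1 hru).resolve_right hu
    have hsr : 0 < s * r := mul_pos_of_neg_of_neg hs hr
    have hb2 : 0 ≤ b * (s * r) := mul_nonneg hb (le_of_lt hsr)
    linarith

noncomputable def pathSum : List E → ℝ
  | [] => 0
  | [_] => 0
  | x :: y :: t => angle x y + pathSum (y :: t)

@[simp] lemma pathSum_nil : pathSum ([] : List E) = 0 := rfl
@[simp] lemma pathSum_single (x : E) : pathSum [x] = 0 := rfl
@[simp] lemma pathSum_cons_cons (x y : E) (t : List E) :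
    pathSum (x :: y :: t) = angle x y + pathSum (y :: t) := rfl

lemma pathSum_ge (x y : E) (l : List E) : angle x y ≤ pathSum (x :: (l ++ [y])) := by
  induction l generalizing x with
  | nil => simp
  | cons z l ih =>
    simp only [List.cons_append, pathSum_cons_cons]
    calc angle x y ≤ angle x z + angle z y := my_angle_triangle x z y
      _ ≤ angle x z + pathSum (z :: (l ++ [y])) := by linarith [ih z]

lemma pathSum_concat (x c : E) (l : List E) :
    pathSum (x :: (l ++ [c])) = pathSum (x :: l) + angle (l.getLastD x) c := by
  induction l generalizing x with
  | nil => simp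
  | cons z l ih =>
    simp only [List.cons_append, pathSum_cons_cons, List.getLastD_cons]
    rw [ih z]
    ring

lemma angle_pi_of_comb {x y : E} (hx : x ≠ 0) {s t : ℝ} (hs : 0 < s) (ht : 0 < t)
    (h : s • x + t • y = 0) : angle x y = π := by
  have h1 : t • y = (-s) • x := by
    rw [neg_smul]
    exact eq_neg_of_add_eq_zero_right h
  have h2 : y = (t⁻¹ * (-s)) • x := by
    calc y = t⁻¹ • t • y := by rw [smul_smul, inv_mul_cancel₀ (ne_of_gt ht), one_smul]
      _ = t⁻¹ • (-s) • x := by rw [h1]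
      _ = (t⁻¹ * (-s)) • x := smul_smul _ _ _
  exact angle_eq_pi_iff.2 ⟨hx, t⁻¹ * (-s), by
    have : 0 < t⁻¹ := inv_pos.2 ht
    nlinarith, h2⟩

lemma key (m : ℕ) : ∀ (l : List (E × ℝ)), l.length = m → 2 ≤ l.length →
    (∀ p ∈ l, p.1 ≠ (0:E)) → (∀ p ∈ l, 0 ≤ p.2) →
    (l.map fun p => p.2 • p.1).sum = 0 → 0 < (l.map Prod.snd).sum →
    2 * π ≤ pathSum (l.map Prod.fst ++ [(l.map Prod.fst).headD 0]) := by
  induction m using Nat.strong_induction_on with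
  | _ m ih =>
  intro l hlen h2 hnz hnn hsum hpos
  rcases l with _ | ⟨⟨x, s⟩, l⟩
  · simp at h2
  rcases l with _ | ⟨⟨y, t⟩, r⟩
  · simp at h2
  have hx : x ≠ 0 := hnz (x, s) (by simp)
  have hy : y ≠ 0 := hnz (y, t) (by simp)
  have hs : 0 ≤ s := hnn (x, s) (by simp)
  have ht : 0 ≤ t := hnn (y, t) (by simp)
  simp only [List.map_cons, List.sum_cons] at hsum hpos
  rcases r with _ | ⟨q, r'⟩
  · -- base case: two points
    simp only [List.map_nil, List.sum_nil, add_zero] at hsum hpos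
    have hs' : 0 < s := by
      rcases lt_or_eq_of_le hs with h | h
      · exact h
      exfalso
      rw [← h, zero_smul, zero_add] at hsum
      rw [← h, zero_add] at hpos
      exact hy ((smul_eq_zero.1 hsum).resolve_left (ne_of_gt hpos))
    have ht' : 0 < t := by
      rcases lt_or_eq_of_le ht with h | h
      · exact h
      exfalso
      rw [← h, zero_smul, add_zero] at hsum
      rw [← h, add_zero] at hpos
      exact hx ((smul_eq_zero.1 hsum).resolve_left (ne_of_gt hpos))
    have hpi : angle x y = π := angle_pi_of_comb hx hs' ht' hsum
    simp only [List.map_cons, List.map_nil, List.headD_cons, List.cons_append, List.nil_append,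
      pathSum_cons_cons, pathSum_single]
    rw [hpi, angle_comm y x, hpi]
    linarith
  · -- inductive step
    set m' : List E := r'.map Prod.fst with hm'
    have hq1 : q.1 ≠ 0 := hnz q (by simp)
    have hlen' : m = r'.length + 3 := by
      rw [← hlen]; simp
    -- normalize the goal
    simp only [List.map_cons, List.headD_cons, List.cons_append] at hsum ⊢
    rw [pathSum_cons_cons, pathSum_cons_cons, pathSum_concat]
    -- goal : 2π ≤ angle x y + (angle y q.1 + (pathSum (q.1 :: m') + angle (m'.getLastD q.1) x))
    rcases lt_or_eq_of_le hs with hs' | hs'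
    rcases lt_or_eq_of_le ht with ht' | ht'
    · -- both positive : merge
      by_cases hw0 : s • x + t • y = 0
      · -- adjacent antipodal pair
        have hpi : angle x y = π := angle_pi_of_comb hx hs' ht' hw0
        have hge := pathSum_ge y x (q.1 :: m')
        simp only [List.cons_append] at hge
        rw [pathSum_cons_cons, pathSum_concat] at hge
        rw [angle_comm, hpi] at hge
        rw [hpi]
        linarith
      · -- merge x and y into w
        set w : E := s • x + t • y with hwdef
        have hmerge : angle x w + angle w y = angle x y := my_angle_merge hx hy hs ht hw0
        have htri1 : angle w q.1 ≤ angle w y + angle y q.1 := my_angle_triangle w y q.1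
        have htri2 : angle (m'.getLastD q.1) w
            ≤ angle (m'.getLastD q.1) x + angle x w := my_angle_triangle _ x w
        have hih := ih (((w, (1:ℝ)) :: q :: r').length) (by rw [hlen']; simp)
          ((w, (1:ℝ)) :: q :: r') rfl (by simp)
          (by
            rintro p hp
            rcases List.mem_cons.1 hp with rfl | hp
            · exact hw0
            · exact hnz p (by simp [hp]))
          (by
            rintro p hp
            rcases List.mem_cons.1 hp with rfl | hp
            · norm_num
            · exact hnn p (by simp [hp]))
          (by
            simp only [List.map_cons, List.sum_cons, one_smul]
            rw [← add_assoc] at hsum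
            exact hsum)
          (by
            have : (0:ℝ) ≤ (List.map Prod.snd (q :: r')).sum := by
              apply List.sum_nonneg
              intro a ha
              obtain ⟨p, hp, rfl⟩ := List.mem_map.1 ha
              exact hnn p (by simp [hp])
            simp only [List.map_cons, List.sum_cons] at this ⊢
            linarith)
        simp only [List.map_cons, List.headD_cons, List.cons_append] at hih
        rw [pathSum_cons_cons, pathSum_concat] at hih
        linarith
    · -- t = 0 : drop (y, t)
      have htri : angle x q.1 ≤ angle x y + angle y q.1 := my_angle_triangle x y q.1
      have hih := ih (((x, s) :: q :: r').length) (by rw [hlen']; simp)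
        ((x, s) :: q :: r') rfl (by simp)
        (fun p hp => hnz p (by
          rcases List.mem_cons.1 hp with rfl | hp <;> simp [hp]))
        (fun p hp => hnn p (by
          rcases List.mem_cons.1 hp with rfl | hp <;> simp [hp]))
        (by
          simp only [List.map_cons, List.sum_cons]
          rw [← ht', zero_smul, zero_add] at hsum
          exact hsum)
        (by
          simp only [List.map_cons, List.sum_cons] at hpos ⊢
          rw [← ht', zero_add] at hpos
          exact hpos)
      simp only [List.map_cons, List.headD_cons, List.cons_append] at hih
      rw [pathSum_cons_cons, pathSum_concat] at hih
      have h0 : 0 ≤ angle x y := angle_nonneg x y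
      linarith
    · -- s = 0 : drop (x, s)
      have htri : angle (m'.getLastD q.1) y
          ≤ angle (m'.getLastD q.1) x + angle x y := my_angle_triangle _ x y
      have hih := ih (((y, t) :: q :: r').length) (by rw [hlen']; simp)
        ((y, t) :: q :: r') rfl (by simp)
        (fun p hp => hnz p (by
          rcases List.mem_cons.1 hp with rfl | hp <;> simp [hp]))
        (fun p hp => hnn p (by
          rcases List.mem_cons.1 hp with rfl | hp <;> simp [hp]))
        (by
          simp only [List.map_cons, List.sum_cons]
          rw [← hs', zero_smul, zero_add] at hsum
          exact hsum)
        (by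
          simp only [List.map_cons, List.sum_cons] at hpos ⊢
          rw [← hs', zero_add] at hpos
          exact hpos)
      simp only [List.map_cons, List.headD_cons, List.cons_append] at hih
      rw [pathSum_cons_cons, pathSum_concat] at hih
      linarith

lemma sum_zmod {M : Type*} [AddCommMonoid M] (n : ℕ) [NeZero n] (f : ZMod n → M) :
    ∑ i : ZMod n, f i = ∑ k ∈ Finset.range n, f (k : ZMod n) := by
  rw [← Fin.sum_univ_eq_sum_range]
  refine (Fintype.sum_bijective (fun k : Fin n => ((k : ℕ) : ZMod n)) ⟨?_, ?_⟩ _ _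
    (fun k => rfl)).symm
  · intro a b h
    have := congrArg ZMod.val h
    rwa [ZMod.val_cast_of_lt a.isLt, ZMod.val_cast_of_lt b.isLt, ← Fin.ext_iff] at this
  · intro i
    exact ⟨⟨i.val, ZMod.val_lt i⟩, ZMod.natCast_rightInverse i⟩

lemma list_range_map_sum {M : Type*} [AddCommMonoid M] (n : ℕ) (f : ℕ → M) :
    ((List.range n).map f).sum = ∑ i ∈ Finset.range n, f i := by
  induction n with
  | zero => simp
  | succ n ih =>
    rw [List.range_succ, List.map_append, List.sum_append, Finset.sum_range_succ, ih]
    simp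

lemma pathSum_range (k : ℕ) : ∀ (f : ℕ → E) (c : E),
    pathSum ((List.range (k + 1)).map f ++ [c])
      = ∑ i ∈ Finset.range k, angle (f i) (f (i + 1)) + angle (f k) c := by
  induction k with
  | zero => intro f c; simp [List.range_succ]
  | succ k ih =>
    intro f c
    have h1 := ih (fun i => f (i + 1)) c
    have h2 : (List.range (k + 2)).map f = f 0 :: (List.range (k + 1)).map (fun i => f (i + 1)) := by
      rw [List.range_succ_eq_map]
      simp [Function.comp_def, Nat.succ_eq_add_one]
    have h3 : (List.range (k + 1)).map (fun i => f (i + 1)) ++ [c]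
        = f 1 :: ((List.range k).map (fun i => f (i + 1 + 1)) ++ [c]) := by
      rw [List.range_succ_eq_map]
      simp [Function.comp_def, Nat.succ_eq_add_one]
    rw [h2, List.cons_append, h3, pathSum_cons_cons, ← h3, h1,
      Finset.sum_range_succ' (fun i => angle (f i) (f (i + 1))) k]
    ring

end Helpers


open Real EuclideanGeometry

theorem sum_angles_at_interior_point_ge_two_pi
    (n : ℕ) (hn : 3 ≤ n) [NeZero n]
    (A : ZMod n → EuclideanSpace ℝ (Fin 3)) (P : EuclideanSpace ℝ (Fin 3))
    (hP : P ∈ convexHull ℝ (Set.range A)) (hPA : ∀ i, P ≠ A i) :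
    2 * π ≤ ∑ i : ZMod n, ∠ (A i) P (A (i + 1)) := by
  set v : ZMod n → EuclideanSpace ℝ (Fin 3) := fun i => A i - P with hvdef
  have hv : ∀ i, v i ≠ 0 := fun i => sub_ne_zero_of_ne (Ne.symm (hPA i))
  have hangle : ∀ i j : ZMod n,
      ∠ (A i) P (A j) = InnerProductGeometry.angle (v i) (v j) := by
    intro i j
    simp [EuclideanGeometry.angle, hvdef, vsub_eq_sub]
  -- extract convex combination weights
  rw [convexHull_range_eq_exists_affineCombination] at hP
  obtain ⟨s, w, hw0, hw1, haff⟩ := hP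
  set t : ZMod n → ℝ := fun i => if i ∈ s then w i else 0 with htdef
  have ht0 : ∀ i, 0 ≤ t i := by
    intro i
    simp only [htdef]
    split
    · exact hw0 i ‹_›
    · exact le_refl 0
  have ht1 : ∑ i : ZMod n, t i = 1 := by
    simp only [htdef]
    rw [Finset.sum_ite_mem, Finset.univ_inter]
    exact hw1
  have htP : ∑ i : ZMod n, t i • A i = P := by
    have h1 : ∑ i : ZMod n, t i • A i = ∑ i ∈ s, w i • A i := by
      simp only [htdef, ite_smul, zero_smul]
      rw [Finset.sum_ite_mem, Finset.univ_inter]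
    rw [h1, ← Finset.centerMass_eq_of_sum_1 s A hw1,
      ← affineCombination_eq_centerMass hw1, haff]
  have hvsum : ∑ i : ZMod n, t i • v i = 0 := by
    simp only [hvdef, smul_sub]
    rw [Finset.sum_sub_distrib, htP, ← Finset.sum_smul, ht1, one_smul, sub_self]
  -- build the list
  set f : ℕ → EuclideanSpace ℝ (Fin 3) := fun k => v (k : ZMod n) with hfdef
  set L : List (EuclideanSpace ℝ (Fin 3) × ℝ) :=
    (List.range n).map (fun k => (f k, t (k : ZMod n))) with hLdef
  have hLfst : L.map Prod.fst = (List.range n).map f := by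
    simp [hLdef, List.map_map, Function.comp_def]
  obtain ⟨m, rfl⟩ : ∃ m, n = m + 1 := ⟨n - 1, by omega⟩
  have hhead : ((List.range (m+1)).map f).headD 0 = f 0 := by
    rw [List.range_succ_eq_map]
    simp
  have hkey := key L.length L rfl
    (by simp [hLdef]; omega)
    (by
      rintro p hp
      simp only [hLdef, List.mem_map, List.mem_range] at hp
      obtain ⟨k, -, rfl⟩ := hp
      exact hv _)
    (by
      rintro p hp
      simp only [hLdef, List.mem_map, List.mem_range] at hp
      obtain ⟨k, -, rfl⟩ := hp
      exact ht0 _)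
    (by
      simp only [hLdef, List.map_map, Function.comp_def]
      rw [list_range_map_sum (m+1) (fun k => t (k : ZMod (m+1)) • f k),
        ← sum_zmod (m+1) (fun i => t i • v i)]
      exact hvsum)
    (by
      simp only [hLdef, List.map_map, Function.comp_def]
      rw [list_range_map_sum (m+1) (fun k => t (k : ZMod (m+1))),
        ← sum_zmod (m+1) t, ht1]
      norm_num)
  rw [hLfst, hhead, pathSum_range m f (f 0)] at hkey
  -- rewrite the goal sum
  have hgoal : ∑ i : ZMod (m+1), ∠ (A i) P (A (i + 1))
      = ∑ i ∈ Finset.range m, InnerProductGeometry.angle (f i) (f (i+1))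
        + InnerProductGeometry.angle (f m) (f 0) := by
    rw [show (∑ i : ZMod (m+1), ∠ (A i) P (A (i + 1)))
        = ∑ i : ZMod (m+1), InnerProductGeometry.angle (v i) (v (i+1)) by
      exact Finset.sum_congr rfl fun i _ => hangle i (i+1)]
    rw [sum_zmod (m+1) (fun i => InnerProductGeometry.angle (v i) (v (i+1))),
      Finset.sum_range_succ]
    congr 1
    · refine Finset.sum_congr rfl fun k _ => ?_
      simp only [hfdef]
      norm_cast
    · simp only [hfdef]
      have h : ((m : ZMod (m+1)) + 1) = ((0:ℕ) : ZMod (m+1)) := by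
        rw [Nat.cast_zero]
        have := ZMod.natCast_self (m+1)
        rw [Nat.cast_add, Nat.cast_one] at this
        exact this
      rw [h]
  rw [hgoal]
  exact hkey
end

section
/- (Polygonal Fenchel theorem) Let n ≥ 3 and let A : ZMod n → EuclideanSpace ℝ (Fin 3) be a closed n-gon with A i ≠ A (i+1) for all i. Then the sum of the external angles of the polygon is at least 2π: ∑ i, (π − ∠ (A (i−1)) (A i) (A (i+1))) ≥ 2π. -/
/-!
An external angle of the polygon is the angle between consecutive edge vectors, so the sum of
external angles is the length of the closed spherical polygon traced by the edge directions.
If this length `L` were `< 2π`, split the loop at a vertex `p` and at the point `q` halfway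
around it; every vertex `x` then satisfies `∠(x, p) + ∠(x, q) ≤ L / 2 < π`, which puts all edge
vectors in the open hemisphere centred at `p / ‖p‖ + q / ‖q‖`. This is impossible, since the edge
vectors of a closed polygon sum to zero.
-/

open Real InnerProductGeometry NormedSpace Finset

open scoped RealInnerProductSpace NNReal

theorem ZMod.sum_eq_sum_range {M : Type*} [AddCommMonoid M] (n : ℕ) [NeZero n]
    (f : ZMod n → M) : ∑ i, f i = ∑ k ∈ range n, f k :=
  sum_nbij' ZMod.val Nat.cast (fun i _ => mem_range.2 (ZMod.val_lt i)) (fun _ _ => mem_univ _)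
    (fun i _ => ZMod.natCast_zmod_val i) (fun _ hk => ZMod.val_cast_of_lt (mem_range.1 hk))
    (fun i _ => by rw [ZMod.natCast_zmod_val])

theorem Finset.exists_sum_range_le_le_sum_range_succ (d : ℕ → ℝ) {N : ℕ} (hN : 0 < N) {c : ℝ}
    (hc0 : 0 ≤ c) (hcN : c ≤ ∑ j ∈ range N, d j) :
    ∃ k < N, ∑ j ∈ range k, d j ≤ c ∧ c ≤ ∑ j ∈ range (k + 1), d j := by
  classical
  set k := Nat.findGreatest (fun j => ∑ i ∈ range j, d i ≤ c) (N - 1)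
  have hkN : k ≤ N - 1 := Nat.findGreatest_le _
  refine ⟨k, by omega, Nat.findGreatest_spec (P := fun j => ∑ i ∈ range j, d i ≤ c)
    (Nat.zero_le _) (by simpa using hc0), ?_⟩
  rcases hkN.lt_or_eq with hlt | heq
  · exact (not_le.1 (Nat.findGreatest_is_greatest (P := fun j => ∑ i ∈ range j, d i ≤ c)
      (k := k + 1) (Nat.lt_succ_self _) hlt)).le
  · rwa [heq, Nat.sub_add_cancel hN]

section

variable {V : Type*} [NormedAddCommGroup V] [InnerProductSpace ℝ V]

theorem EuclideanGeometry.pi_sub_angle_eq_angle_vsub {P : Type*} [MetricSpace P]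
    [NormedAddTorsor V P] (a b c : P) :
    π - angle a b c = InnerProductGeometry.angle (b -ᵥ a) (c -ᵥ b) := by
  rw [EuclideanGeometry.angle, ← angle_neg_left, neg_vsub_eq_vsub_rev]

namespace InnerProductGeometry

theorem angle_le_sum_angle_Ico {w : ℕ → V} (hw : ∀ k, w k ≠ 0) {a b : ℕ} (hab : a ≤ b) :
    angle (w a) (w b) ≤ ∑ j ∈ Ico a b, angle (w j) (w (j + 1)) := by
  induction b, hab using Nat.le_induction with
  | base => simp [angle_self (hw a)]
  | succ b hab ih =>
    rw [sum_Ico_succ_top hab]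
    exact (angle_le_angle_add_angle _ (w b) _).trans (by linarith)

theorem inner_add_pos_of_angle_add_angle_lt_pi {x p q : V} (hx : x ≠ 0) (hp : ‖p‖ = 1)
    (hq : ‖q‖ = 1) (h : angle x p + angle x q < π) : 0 < ⟪x, p + q⟫ := by
  have hcos : cos (π - angle x q) < cos (angle x p) :=
    cos_lt_cos_of_nonneg_of_le_pi (angle_nonneg x p) (by linarith [angle_nonneg x q])
      (by linarith)
  rw [cos_pi_sub] at hcos
  rw [inner_add_right, ← cos_angle_mul_norm_mul_norm x p, ← cos_angle_mul_norm_mul_norm x q,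
    hp, hq, ← add_mul]
  exact mul_pos (by linarith) (by simpa using hx)

theorem exists_angle_eq_of_le_angle {x y : V} (hx : x ≠ 0) (hy : y ≠ 0) (hxy : angle x y < π)
    {r : ℝ} (hr0 : 0 ≤ r) (hr : r ≤ angle x y) :
    ∃ q ≠ 0, angle x q = r ∧ angle q y = angle x y - r := by
  set γ : ℝ → V := fun t => (1 - t) • x + t • y
  have hγ : ∀ t ∈ Set.Icc (0 : ℝ) 1, γ t ≠ 0 := by
    set m := normalize x + normalize y
    have hxm : 0 < ⟪x, m⟫ := inner_add_pos_of_angle_add_angle_lt_pi hx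
      (norm_normalize_eq_one_iff.2 hx) (norm_normalize_eq_one_iff.2 hy)
      (by simpa [angle_self hx] using hxy)
    have hym : 0 < ⟪y, m⟫ := inner_add_pos_of_angle_add_angle_lt_pi hy
      (norm_normalize_eq_one_iff.2 hx) (norm_normalize_eq_one_iff.2 hy)
      (by simpa [angle_self hy, angle_comm] using hxy)
    intro t ⟨ht0, ht1⟩ hzero
    have h := congrArg (⟪·, m⟫) hzero
    simp only [γ, inner_add_left, real_inner_smul_left, inner_zero_left] at h
    rcases ht0.eq_or_lt with rfl | ht0
    · linarith
    · nlinarith [mul_nonneg (sub_nonneg.2 ht1) hxm.le, mul_pos ht0 hym]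
  have hcont : ContinuousOn (fun t => angle x (γ t)) (Set.Icc 0 1) := fun t ht =>
    ((continuousAt_angle (x := (x, γ t)) hx (hγ t ht)).comp (f := fun s : ℝ => (x, γ s))
      (by fun_prop)).continuousWithinAt
  obtain ⟨t, ht, hqr⟩ : r ∈ (fun t => angle x (γ t)) '' Set.Icc 0 1 :=
    intermediate_value_Icc zero_le_one hcont
      ⟨by simpa [γ, angle_self hx] using hr0, by simpa [γ] using hr⟩
  have hmem : γ t ∈ Submodule.span ℝ≥0 {x, y} :=
    Submodule.mem_span_pair.2 ⟨⟨1 - t, by linarith [ht.2]⟩, ⟨t, ht.1⟩, rfl⟩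
  refine ⟨γ t, hγ t ht, hqr, ?_⟩
  rw [angle_eq_angle_add_add_angle_add_of_mem_span (hγ t ht) hmem, ← hqr]
  ring

theorem exists_forall_le_inner_pos_of_sum_angle_lt_two_pi {w : ℕ → V} (hw : ∀ k, w k ≠ 0)
    {N : ℕ} (hN : 0 < N) (hper : w N = w 0)
    (hL : ∑ j ∈ range N, angle (w j) (w (j + 1)) < 2 * π) :
    ∃ m : V, ∀ i ≤ N, 0 < ⟪w i, m⟫ := by
  set d : ℕ → ℝ := fun j => angle (w j) (w (j + 1))
  set S : ℕ → ℝ := fun k => ∑ j ∈ range k, d j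
  have hL : S N < 2 * π := hL
  have hS0 : S 0 = 0 := sum_range_zero d
  have hchain : ∀ a b, a ≤ b → angle (w a) (w b) ≤ S b - S a := fun a b hab => by
    simpa only [S, ← sum_Ico_eq_sub d hab] using angle_le_sum_angle_Ico hw hab
  have hSN : 0 ≤ S N := sum_nonneg fun j _ => angle_nonneg _ _
  obtain ⟨k, hkN, hSk, hSk1⟩ : ∃ k < N, S k ≤ S N / 2 ∧ S N / 2 ≤ S (k + 1) :=
    exists_sum_range_le_le_sum_range_succ d hN (by linarith) (by linarith)
  have hSsucc : S (k + 1) = S k + d k := sum_range_succ d k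
  -- Going the other way around the loop gives `2 * d k ≤ S N < 2 * π`.
  have hdk : d k < π := by
    have h1 := hchain 0 k (Nat.zero_le k)
    have h2 := hchain (k + 1) N hkN
    rw [hper] at h2
    have h3 : d k ≤ angle (w 0) (w k) + angle (w (k + 1)) (w 0) := by
      rw [angle_comm (w 0) (w k), angle_comm (w (k + 1))]
      exact angle_le_angle_add_angle _ _ _
    linarith
  obtain ⟨q, hq, hkq, hqk⟩ := exists_angle_eq_of_le_angle (hw k) (hw (k + 1)) hdk
    (r := S N / 2 - S k) (by linarith) (by linarith)
  have hk1q : angle (w (k + 1)) q = d k - (S N / 2 - S k) := by rw [angle_comm, hqk]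
  have hbound : ∀ i ≤ N, angle (w i) (w 0) + angle (w i) q ≤ S N / 2 := by
    intro i hiN
    rcases le_or_gt i k with hik | hki
    · have h1 := hchain 0 i (Nat.zero_le i)
      have h2 := hchain i k hik
      have h3 := angle_le_angle_add_angle (w i) (w k) q
      rw [angle_comm (w i) (w 0)]
      linarith
    · have h1 := hchain i N hiN
      have h2 := hchain (k + 1) i hki
      have h3 := angle_le_angle_add_angle (w i) (w (k + 1)) q
      rw [hper] at h1
      rw [angle_comm] at h2
      linarith
  refine ⟨normalize (w 0) + normalize q, fun i hiN => ?_⟩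
  refine inner_add_pos_of_angle_add_angle_lt_pi (hw i) (norm_normalize_eq_one_iff.2 (hw 0))
    (norm_normalize_eq_one_iff.2 hq) ?_
  simp only [angle_normalize_right]
  linarith [hbound i hiN]

theorem exists_forall_inner_pos_of_sum_angle_lt_two_pi {n : ℕ} [NeZero n] {v : ZMod n → V}
    (hv : ∀ i, v i ≠ 0) (hL : ∑ i, angle (v i) (v (i + 1)) < 2 * π) :
    ∃ m : V, ∀ i, 0 < ⟪v i, m⟫ := by
  obtain ⟨m, hm⟩ := exists_forall_le_inner_pos_of_sum_angle_lt_two_pi (w := fun k : ℕ => v k)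
    (fun k => hv k) (NeZero.pos n) (by simp) (by simpa [ZMod.sum_eq_sum_range] using hL)
  exact ⟨m, fun i => by simpa using hm i.val (ZMod.val_lt i).le⟩

end InnerProductGeometry

end

open EuclideanGeometry

theorem polygonal_fenchel_general
    (n : ℕ) [NeZero n]
    (A : ZMod n → EuclideanSpace ℝ (Fin 3))
    (hA : ∀ i, A i ≠ A (i + 1)) :
    2 * π ≤ ∑ i : ZMod n, (π - ∠ (A (i - 1)) (A i) (A (i + 1))) := by
  set v : ZMod n → EuclideanSpace ℝ (Fin 3) := fun i => A (i + 1) -ᵥ A i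
  have hv : ∀ i, v i ≠ 0 := fun i => vsub_ne_zero.2 (hA i).symm
  have hturn : ∑ i : ZMod n, (π - ∠ (A (i - 1)) (A i) (A (i + 1)))
      = ∑ i, InnerProductGeometry.angle (v i) (v (i + 1)) := by
    refine Fintype.sum_equiv (Equiv.subRight 1) _ _ fun i => ?_
    simp [v, pi_sub_angle_eq_angle_vsub]
  have hclosed : ∑ i, v i = 0 := by
    simp only [v, vsub_eq_sub, sum_sub_distrib]
    rw [Fintype.sum_equiv (Equiv.addRight 1) (fun i => A (i + 1)) A fun _ => rfl, sub_self]
  rw [hturn]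
  by_contra! hlt
  obtain ⟨m, hm⟩ := InnerProductGeometry.exists_forall_inner_pos_of_sum_angle_lt_two_pi hv hlt
  have hpos : 0 < ∑ i, ⟪v i, m⟫ := sum_pos (fun i _ => hm i) univ_nonempty
  rw [← sum_inner, hclosed, inner_zero_left] at hpos
  exact hpos.false

/-- Polygonal Fenchel theorem: the total external angle of a closed polygon in
`ℝ³` is at least `2π`. -/
theorem polygonal_fenchel
    (n : ℕ) (hn : 3 ≤ n) [NeZero n]
    (A : ZMod n → EuclideanSpace ℝ (Fin 3))
    (hA : ∀ i, A i ≠ A (i + 1)) :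
    2 * π ≤ ∑ i : ZMod n, (π - ∠ (A (i - 1)) (A i) (A (i + 1))) :=
  polygonal_fenchel_general n A hA
end

section
/- For nonzero purely imaginary quaternions a, b, c, d ∈ Quaternion ℝ, the normalized real part of the cross-ratio-type product q = a*b⁻¹*c*d⁻¹ satisfies −(a*b⁻¹*c*d⁻¹).re / ‖a*b⁻¹*c*d⁻¹‖ = ((a*c).re*(b*d).re − (a*b).re*(c*d).re − (b*c).re*(d*a).re) / (‖a‖*‖b‖*‖c‖*‖d‖). (In the geometric interpretation, where a,b,c,d are the oriented edge vectors of two triangles sharing an edge, this common value is the cosine of the external intersection angle of their circumcircles.) -/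
/-!
A purely imaginary quaternion satisfies `x⁻¹ = -x / ‖x‖²`, so `a * b⁻¹ * c * d⁻¹` is the positive
multiple `(‖b‖ ‖d‖)⁻² • (a * b * c * d)`, of norm `‖a‖ ‖c‖ / (‖b‖ ‖d‖)`. For pure quaternions
`x * y = -⟨x, y⟩ + x × y`, hence `-(a * b * c * d).re = ⟨a × b, c × d⟩ - ⟨a, b⟩⟨c, d⟩`, and the
Binet–Cauchy identity `⟨a × b, c × d⟩ = ⟨a, c⟩⟨b, d⟩ - ⟨a, d⟩⟨b, c⟩` gives the numerator.
-/

open Quaternion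

namespace Quaternion

variable {R : Type*}

theorem neg_re_mul_mul_mul_of_re_eq_zero [CommRing R] {a b c d : ℍ[R]}
    (ha : a.re = 0) (hb : b.re = 0) (hc : c.re = 0) (hd : d.re = 0) :
    -(a * b * c * d).re =
      (a * c).re * (b * d).re - (a * b).re * (c * d).re - (b * c).re * (d * a).re := by
  simp only [re_mul, imI_mul, imJ_mul, imK_mul, ha, hb, hc, hd]
  ring

variable [Field R] [LinearOrder R] [IsStrictOrderedRing R]

theorem inv_eq_neg_inv_normSq_smul_of_re_eq_zero {x : ℍ[R]} (hx : x.re = 0) :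
    x⁻¹ = -((normSq x)⁻¹ • x) := by
  rw [inv_def, star_eq_neg.mpr hx, smul_neg]

theorem mul_inv_mul_mul_inv_of_re_eq_zero (a c : ℍ[R]) {b d : ℍ[R]} (hb : b.re = 0)
    (hd : d.re = 0) : a * b⁻¹ * c * d⁻¹ = (normSq b * normSq d)⁻¹ • (a * b * c * d) := by
  rw [inv_eq_neg_inv_normSq_smul_of_re_eq_zero hb, inv_eq_neg_inv_normSq_smul_of_re_eq_zero hd]
  simp only [mul_neg, neg_mul, mul_smul_comm, smul_mul_assoc, smul_neg, neg_neg, smul_smul]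
  rw [mul_inv, mul_comm]

end Quaternion

theorem cos_beta_formula_general
    (a b c d : Quaternion ℝ)
    (ha : a.re = 0) (hb : b.re = 0) (hc : c.re = 0) (hd : d.re = 0)
    (hb0 : b ≠ 0) (hd0 : d ≠ 0) :
    -(a * b⁻¹ * c * d⁻¹).re / ‖a * b⁻¹ * c * d⁻¹‖ =
      ((a * c).re * (b * d).re - (a * b).re * (c * d).re - (b * c).re * (d * a).re) /
        (‖a‖ * ‖b‖ * ‖c‖ * ‖d‖) := by
  have hre : (a * b⁻¹ * c * d⁻¹).re = (a * b * c * d).re / (‖b‖ * ‖d‖) ^ 2 := by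
    rw [mul_inv_mul_mul_inv_of_re_eq_zero a c hb hd, re_smul, normSq_eq_norm_mul_self,
      normSq_eq_norm_mul_self, smul_eq_mul]
    ring
  have hnorm : ‖a * b⁻¹ * c * d⁻¹‖ = ‖a‖ * ‖c‖ / (‖b‖ * ‖d‖) := by
    simp only [norm_mul, norm_inv]
    ring
  have hb' : ‖b‖ ≠ 0 := norm_ne_zero_iff.mpr hb0
  have hd' : ‖d‖ ≠ 0 := norm_ne_zero_iff.mpr hd0
  rw [hre, hnorm, ← neg_re_mul_mul_mul_of_re_eq_zero ha hb hc hd]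
  field_simp

/-- Formula for the cosine of the external intersection angle of circumcircles in
terms of the cross-ratio-type product `q = a * b⁻¹ * c * d⁻¹` of nonzero purely
imaginary quaternions. -/
theorem cos_beta_formula
    (a b c d : Quaternion ℝ)
    (ha : a.re = 0) (hb : b.re = 0) (hc : c.re = 0) (hd : d.re = 0)
    (ha0 : a ≠ 0) (hb0 : b ≠ 0) (hc0 : c ≠ 0) (hd0 : d ≠ 0) :
    -(a * b⁻¹ * c * d⁻¹).re / ‖a * b⁻¹ * c * d⁻¹‖ =
      ((a * c).re * (b * d).re - (a * b).re * (c * d).re - (b * c).re * (d * a).re) /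
        (‖a‖ * ‖b‖ * ‖c‖ * ‖d‖) :=
  cos_beta_formula_general a b c d ha hb hc hd hb0 hd0
end

section
/- Let x₁, x₂, x₃, x₄ ∈ Quaternion ℝ be pairwise distinct nonzero purely imaginary quaternions. Then the real part and the norm of the quaternionic cross-ratio are invariant under the inversion x ↦ x⁻¹: (q(x₁⁻¹, x₂⁻¹, x₃⁻¹, x₄⁻¹)).re = (q(x₁, x₂, x₃, x₄)).re and ‖q(x₁⁻¹, x₂⁻¹, x₃⁻¹, x₄⁻¹)‖ = ‖q(x₁, x₂, x₃, x₄)‖. -/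
/-!
Writing `dᵢⱼ = ‖xᵢ - xⱼ‖`, the norm of the cross-ratio is `d₁₂ d₃₄ / (d₂₃ d₄₁)`, and for purely
imaginary points a Ptolemy-type identity for `re ((x₁ - x₂)(x₂ - x₃)(x₃ - x₄)(x₄ - x₁))` gives its
real part as `(d₁₂² d₃₄² + d₂₃² d₄₁² - d₁₃² d₂₄²) / (2 d₂₃² d₄₁²)`. Inversion preserves purely imaginary
quaternions and rescales distances by `‖x⁻¹ - y⁻¹‖ = ‖x - y‖ / (‖x‖ ‖y‖)`; both expressions are
homogeneous of the same degree in each point, so the factors cancel.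
-/

/-- The quaternionic cross-ratio of four points. -/
noncomputable def quatCrossRatio (x₁ x₂ x₃ x₄ : Quaternion ℝ) : Quaternion ℝ :=
  (x₁ - x₂) * (x₂ - x₃)⁻¹ * (x₃ - x₄) * (x₄ - x₁)⁻¹

namespace Quaternion

theorem re_inv (a : ℍ[ℝ]) : a⁻¹.re = a.re / normSq a := by
  rw [inv_def, re_smul, re_star, smul_eq_mul, inv_mul_eq_div]

theorem inv_eq_neg_smul_of_re_eq_zero {a : ℍ[ℝ]} (ha : a.re = 0) :
    a⁻¹ = -(normSq a)⁻¹ • a := by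
  rw [inv_def, star_eq_neg.mpr ha, smul_neg, neg_smul]

theorem normSq_sub_eq_dist_sq (x y : ℍ[ℝ]) : normSq (x - y) = dist x y ^ 2 := by
  rw [normSq_eq_norm_mul_self, dist_eq_norm, sq]

theorem two_mul_re_sub_mul_sub_mul_sub_mul_sub {x₁ x₂ x₃ x₄ : ℍ[ℝ]}
    (h₁ : x₁.re = 0) (h₂ : x₂.re = 0) (h₃ : x₃.re = 0) (h₄ : x₄.re = 0) :
    2 * ((x₁ - x₂) * (x₂ - x₃) * (x₃ - x₄) * (x₄ - x₁)).re =
      normSq (x₁ - x₂) * normSq (x₃ - x₄) + normSq (x₂ - x₃) * normSq (x₄ - x₁) -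
        normSq (x₁ - x₃) * normSq (x₂ - x₄) := by
  simp only [normSq_def', re_mul, imI_mul, imJ_mul, imK_mul, re_sub, imI_sub, imJ_sub, imK_sub,
    h₁, h₂, h₃, h₄]
  ring

end Quaternion

open Quaternion

theorem norm_quatCrossRatio (x₁ x₂ x₃ x₄ : ℍ[ℝ]) :
    ‖quatCrossRatio x₁ x₂ x₃ x₄‖ = dist x₁ x₂ * dist x₃ x₄ / (dist x₂ x₃ * dist x₄ x₁) := by
  simp only [quatCrossRatio, norm_mul, norm_inv, dist_eq_norm]
  ring

theorem re_quatCrossRatio {x₁ x₂ x₃ x₄ : ℍ[ℝ]}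
    (h₁ : x₁.re = 0) (h₂ : x₂.re = 0) (h₃ : x₃.re = 0) (h₄ : x₄.re = 0) :
    (quatCrossRatio x₁ x₂ x₃ x₄).re =
      (dist x₁ x₂ ^ 2 * dist x₃ x₄ ^ 2 + dist x₂ x₃ ^ 2 * dist x₄ x₁ ^ 2 -
        dist x₁ x₃ ^ 2 * dist x₂ x₄ ^ 2) / (2 * dist x₂ x₃ ^ 2 * dist x₄ x₁ ^ 2) := by
  have hpure : ∀ {x y : ℍ[ℝ]}, x.re = 0 → y.re = 0 → (x - y).re = 0 := fun hx hy => by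
    rw [re_sub, hx, hy, sub_zero]
  have ptolemy := two_mul_re_sub_mul_sub_mul_sub_mul_sub h₁ h₂ h₃ h₄
  simp only [normSq_sub_eq_dist_sq] at ptolemy
  rw [quatCrossRatio, inv_eq_neg_smul_of_re_eq_zero (hpure h₂ h₃),
    inv_eq_neg_smul_of_re_eq_zero (hpure h₄ h₁)]
  simp only [mul_smul_comm, smul_mul_assoc, smul_smul, re_smul, smul_eq_mul,
    normSq_sub_eq_dist_sq, ← ptolemy]
  field_simp

theorem quatCrossRatio_inv_invariant_general
    (x₁ x₂ x₃ x₄ : Quaternion ℝ)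
    (h₁ : x₁.re = 0) (h₂ : x₂.re = 0) (h₃ : x₃.re = 0) (h₄ : x₄.re = 0)
    (h₁0 : x₁ ≠ 0) (h₂0 : x₂ ≠ 0) (h₃0 : x₃ ≠ 0) (h₄0 : x₄ ≠ 0) :
    (quatCrossRatio x₁⁻¹ x₂⁻¹ x₃⁻¹ x₄⁻¹).re = (quatCrossRatio x₁ x₂ x₃ x₄).re ∧
      ‖quatCrossRatio x₁⁻¹ x₂⁻¹ x₃⁻¹ x₄⁻¹‖ = ‖quatCrossRatio x₁ x₂ x₃ x₄‖ := by
  have hinv : ∀ {x : ℍ[ℝ]}, x.re = 0 → x⁻¹.re = 0 := fun hx => by rw [re_inv, hx, zero_div]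
  have n₁ : ‖x₁‖ ≠ 0 := norm_ne_zero_iff.mpr h₁0
  have n₂ : ‖x₂‖ ≠ 0 := norm_ne_zero_iff.mpr h₂0
  have n₃ : ‖x₃‖ ≠ 0 := norm_ne_zero_iff.mpr h₃0
  have n₄ : ‖x₄‖ ≠ 0 := norm_ne_zero_iff.mpr h₄0
  constructor
  · rw [re_quatCrossRatio (hinv h₁) (hinv h₂) (hinv h₃) (hinv h₄), re_quatCrossRatio h₁ h₂ h₃ h₄]
    simp only [dist_inv_inv₀, h₁0, h₂0, h₃0, h₄0, ne_eq, not_false_eq_true, div_pow, mul_pow]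
    field_simp
  · rw [norm_quatCrossRatio, norm_quatCrossRatio]
    simp only [dist_inv_inv₀, h₁0, h₂0, h₃0, h₄0, ne_eq, not_false_eq_true]
    field_simp

/-- The real part and the norm of the quaternionic cross-ratio of four pairwise
distinct nonzero purely imaginary quaternions are invariant under the inversion
`x ↦ x⁻¹`. -/
theorem quatCrossRatio_inv_invariant
    (x₁ x₂ x₃ x₄ : Quaternion ℝ)
    (h₁ : x₁.re = 0) (h₂ : x₂.re = 0) (h₃ : x₃.re = 0) (h₄ : x₄.re = 0)
    (h₁0 : x₁ ≠ 0) (h₂0 : x₂ ≠ 0) (h₃0 : x₃ ≠ 0) (h₄0 : x₄ ≠ 0)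
    (h12 : x₁ ≠ x₂) (h13 : x₁ ≠ x₃) (h14 : x₁ ≠ x₄)
    (h23 : x₂ ≠ x₃) (h24 : x₂ ≠ x₄) (h34 : x₃ ≠ x₄) :
    (quatCrossRatio x₁⁻¹ x₂⁻¹ x₃⁻¹ x₄⁻¹).re = (quatCrossRatio x₁ x₂ x₃ x₄).re ∧
      ‖quatCrossRatio x₁⁻¹ x₂⁻¹ x₃⁻¹ x₄⁻¹‖ = ‖quatCrossRatio x₁ x₂ x₃ x₄‖ :=
  quatCrossRatio_inv_invariant_general x₁ x₂ x₃ x₄ h₁ h₂ h₃ h₄ h₁0 h₂0 h₃0 h₄0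
end

section
/- Let x₁, x₂, x₃, x₄ ∈ Quaternion ℝ be pairwise distinct quaternions and u ∈ Quaternion ℝ a nonzero quaternion. Then the quaternionic cross-ratio transforms by conjugation under the similarity x ↦ u*x*u⁻¹: q(u*x₁*u⁻¹, u*x₂*u⁻¹, u*x₃*u⁻¹, u*x₄*u⁻¹) = u * q(x₁,x₂,x₃,x₄) * u⁻¹; in particular its real part and its norm are preserved. -/
lemma re_mul_comm (a b : Quaternion ℝ) : (a * b).re = (b * a).re := by
  simp [Quaternion.re_mul]; ring

lemma conj_sub (u a b : Quaternion ℝ) :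
    u * a * u⁻¹ - u * b * u⁻¹ = u * (a - b) * u⁻¹ := by
  rw [mul_sub, sub_mul]

lemma myConjInv (u a : Quaternion ℝ) (hu : u ≠ 0) :
    (u * a * u⁻¹)⁻¹ = u * a⁻¹ * u⁻¹ := by
  rw [mul_inv_rev, mul_inv_rev, inv_inv, ← mul_assoc]

lemma myConjMul (u a b : Quaternion ℝ) (hu : u ≠ 0) :
    (u * a * u⁻¹) * (u * b * u⁻¹) = u * (a * b) * u⁻¹ := by
  simp [mul_assoc, inv_mul_cancel_left₀ hu]

/-- Under the similarity `x ↦ u * x * u⁻¹` the quaternionic cross-ratio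
transforms by conjugation; in particular its real part and its norm are
preserved. -/
theorem quatCrossRatio_conj
    (x₁ x₂ x₃ x₄ : Quaternion ℝ) (u : Quaternion ℝ) (hu : u ≠ 0)
    (h12 : x₁ ≠ x₂) (h13 : x₁ ≠ x₃) (h14 : x₁ ≠ x₄)
    (h23 : x₂ ≠ x₃) (h24 : x₂ ≠ x₄) (h34 : x₃ ≠ x₄) :
    quatCrossRatio (u * x₁ * u⁻¹) (u * x₂ * u⁻¹) (u * x₃ * u⁻¹) (u * x₄ * u⁻¹) =
        u * quatCrossRatio x₁ x₂ x₃ x₄ * u⁻¹ ∧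
      (quatCrossRatio (u * x₁ * u⁻¹) (u * x₂ * u⁻¹) (u * x₃ * u⁻¹) (u * x₄ * u⁻¹)).re =
        (quatCrossRatio x₁ x₂ x₃ x₄).re ∧
      ‖quatCrossRatio (u * x₁ * u⁻¹) (u * x₂ * u⁻¹) (u * x₃ * u⁻¹) (u * x₄ * u⁻¹)‖ =
        ‖quatCrossRatio x₁ x₂ x₃ x₄‖ := by
  have hmain : quatCrossRatio (u * x₁ * u⁻¹) (u * x₂ * u⁻¹) (u * x₃ * u⁻¹) (u * x₄ * u⁻¹) =
      u * quatCrossRatio x₁ x₂ x₃ x₄ * u⁻¹ := by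
    unfold quatCrossRatio
    rw [conj_sub, conj_sub, conj_sub, conj_sub, myConjInv u _ hu, myConjInv u _ hu,
      myConjMul u _ _ hu, myConjMul u _ _ hu, myConjMul u _ _ hu]
  refine ⟨hmain, ?_, ?_⟩
  · rw [hmain, mul_assoc, re_mul_comm, mul_assoc, inv_mul_cancel₀ hu, mul_one]
  · rw [hmain, norm_mul, norm_mul, norm_inv, mul_comm, ← mul_assoc,
      inv_mul_cancel₀ (norm_ne_zero_iff.mpr hu), one_mul]
end

section
/- For every (φ₁, φ₂, φ₃) ∈ Φ, i.e. 0 ≤ φ₁ < π/2, 0 < φ₂ < π/2, 0 < φ₃ < π/2 and π/2 < φ₂ + φ₃, the limit ratio of the discrete to the smooth Willmore energy satisfies Q(φ₁, φ₂, φ₃) > 1. -/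
open Real

/-- The limit of the quotient of the discrete and smooth Willmore energies for a
triangulation with lattice angles `(φ₁, φ₂, φ₃)`. -/
noncomputable def willmoreRatioQ (φ₁ φ₂ φ₃ : ℝ) : ℝ :=
  1 - ((cos (2 * φ₁) * cos φ₃ + cos (2 * φ₁ + 2 * φ₂ + φ₃)) ^ 2 +
        (sin (2 * φ₁) * cos φ₃) ^ 2) /
      (4 * cos φ₂ * cos φ₃ * cos (φ₂ + φ₃))

/-- On the moduli space `Φ` of regular lattices of acute triangles, the energy
ratio `Q` is greater than `1`. -/
theorem willmoreRatioQ_gt_one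
    (φ₁ φ₂ φ₃ : ℝ)
    (h₁ : 0 ≤ φ₁) (h₁' : φ₁ < π / 2)
    (h₂ : 0 < φ₂) (h₂' : φ₂ < π / 2)
    (h₃ : 0 < φ₃) (h₃' : φ₃ < π / 2)
    (h₂₃ : π / 2 < φ₂ + φ₃) :
    1 < willmoreRatioQ φ₁ φ₂ φ₃ := by
  have hpi := Real.pi_pos
  have hc2 : 0 < cos φ₂ := cos_pos_of_mem_Ioo ⟨by linarith, h₂'⟩
  have hc3 : 0 < cos φ₃ := cos_pos_of_mem_Ioo ⟨by linarith, h₃'⟩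
  have hcs : cos (φ₂ + φ₃) < 0 :=
    cos_neg_of_pi_div_two_lt_of_lt h₂₃ (by linarith)
  have hD : 4 * cos φ₂ * cos φ₃ * cos (φ₂ + φ₃) < 0 := by
    have := mul_pos (mul_pos (by norm_num : (0:ℝ) < 4) hc2) hc3
    exact mul_neg_of_pos_of_neg this hcs
  set a := cos (2 * φ₁) * cos φ₃ + cos (2 * φ₁ + 2 * φ₂ + φ₃) with ha
  set b := sin (2 * φ₁) * cos φ₃ with hb
  have hN : 0 < a ^ 2 + b ^ 2 := by
    rcases lt_or_eq_of_le (by positivity : (0:ℝ) ≤ a ^ 2 + b ^ 2) with h | h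
    · exact h
    exfalso
    have ha0 : a = 0 := by nlinarith [sq_nonneg a, sq_nonneg b]
    have hb0 : b = 0 := by nlinarith [sq_nonneg a, sq_nonneg b]
    have hs : sin (2 * φ₁) = 0 := by
      rcases mul_eq_zero.mp hb0 with h' | h'
      · exact h'
      · exact absurd h' (ne_of_gt hc3)
    have hφ10 : φ₁ = 0 := by
      by_contra hne
      have h2φ : 0 < 2 * φ₁ := by
        rcases lt_or_eq_of_le h₁ with h | h
        · linarith
        · exact absurd h.symm hne
      have := sin_pos_of_pos_of_lt_pi h2φ (by linarith)
      linarith [hs ▸ this]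
    rw [ha, hφ10] at ha0
    simp only [mul_zero, Real.cos_zero, one_mul] at ha0
    have key : cos φ₃ + cos (0 + 2 * φ₂ + φ₃) = 2 * cos φ₂ * cos (φ₂ + φ₃) := by
      have h1 : (0:ℝ) + 2 * φ₂ + φ₃ = (φ₂ + φ₃) + φ₂ := by ring
      have h2 : φ₃ = (φ₂ + φ₃) - φ₂ := by ring
      rw [h1, cos_add]
      nth_rewrite 1 [h2]
      rw [cos_sub]
      ring
    rw [key] at ha0
    have : 2 * cos φ₂ * cos (φ₂ + φ₃) < 0 := by
      exact mul_neg_of_pos_of_neg (by linarith) hcs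
    linarith
  unfold willmoreRatioQ
  rw [← ha, ← hb]
  have : (a ^ 2 + b ^ 2) / (4 * cos φ₂ * cos φ₃ * cos (φ₂ + φ₃)) < 0 :=
    div_neg_of_pos_of_neg hN hD
  linarith
end

section
/- The infimum of Q over Φ equals 1: the number 1 is the greatest lower bound of the set {Q(φ₁,φ₂,φ₃) : (φ₁,φ₂,φ₃) ∈ Φ} (IsGLB of the image of Φ under Q). -/
open Real

/-- The moduli space of regular lattices of acute triangles. -/
def willmorePhi : Set (ℝ × ℝ × ℝ) :=
  {φ | 0 ≤ φ.1 ∧ φ.1 < π / 2 ∧ 0 < φ.2.1 ∧ φ.2.1 < π / 2 ∧ 0 < φ.2.2 ∧ φ.2.2 < π / 2 ∧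
    π / 2 < φ.2.1 + φ.2.2}

open Set

/-! On `Φ` the denominator `4 cos φ₂ cos φ₃ cos (φ₂ + φ₃)` is negative, so `Q ≥ 1`. Along the
diagonal `(0, t, t)` the numerator factors as `(2 cos t cos 2t)²`, giving `Q = 1 - cos 2t`,
which sweeps out `(1, 2)` as `t` runs over `(π/4, π/2)`. -/

lemma one_le_willmoreRatioQ (φ₁ : ℝ) {φ₂ φ₃ : ℝ} (h₂ : φ₂ ∈ Ioo 0 (π / 2))
    (h₃ : φ₃ ∈ Ioo 0 (π / 2)) (h₂₃ : π / 2 < φ₂ + φ₃) : 1 ≤ willmoreRatioQ φ₁ φ₂ φ₃ := by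
  have hcos₂ : 0 < cos φ₂ := cos_pos_of_mem_Ioo ⟨by linarith [h₂.1, pi_pos], h₂.2⟩
  have hcos₃ : 0 < cos φ₃ := cos_pos_of_mem_Ioo ⟨by linarith [h₃.1, pi_pos], h₃.2⟩
  have hcos₂₃ : cos (φ₂ + φ₃) < 0 :=
    cos_neg_of_pi_div_two_lt_of_lt h₂₃ (by linarith [h₂.2, h₃.2, pi_pos])
  have hden : 4 * cos φ₂ * cos φ₃ * cos (φ₂ + φ₃) ≤ 0 :=
    (mul_neg_of_pos_of_neg (by positivity) hcos₂₃).le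
  rw [willmoreRatioQ, le_sub_self_iff]
  exact div_nonpos_of_nonneg_of_nonpos (by positivity) hden

lemma willmoreRatioQ_zero_self {t : ℝ} (ht : cos t ≠ 0) :
    willmoreRatioQ 0 t t = 1 - cos (2 * t) := by
  have hnum : cos t + cos (3 * t) = 2 * cos (2 * t) * cos t := by
    rw [cos_add_cos]
    ring_nf
    rw [cos_neg]
  rw [willmoreRatioQ, mul_zero, cos_zero, sin_zero, zero_add, one_mul, zero_mul,
    show 2 * t + t = 3 * t by ring, hnum, ← two_mul]
  rcases eq_or_ne (cos (2 * t)) 0 with h2t | h2t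
  · simp [h2t]
  · field_simp
    ring

lemma Ioo_one_two_subset_image_willmoreRatioQ :
    Ioo 1 2 ⊆ (fun φ : ℝ × ℝ × ℝ => willmoreRatioQ φ.1 φ.2.1 φ.2.2) '' willmorePhi := by
  rintro y ⟨hy₁, hy₂⟩
  have hs₁ : π / 2 < arccos (1 - y) := not_le.mp fun h => by linarith [arccos_le_pi_div_two.mp h]
  have hs₂ : arccos (1 - y) < π := arccos_lt_pi.mpr (by linarith)
  obtain ⟨t, ht⟩ : ∃ t, arccos (1 - y) = 2 * t := ⟨arccos (1 - y) / 2, by ring⟩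
  rw [ht] at hs₁ hs₂
  refine ⟨(0, t, t), ⟨le_rfl, by positivity, by linarith [pi_pos], by linarith, by linarith [pi_pos],
    by linarith, by linarith⟩, ?_⟩
  have hcos : cos t ≠ 0 := (cos_pos_of_mem_Ioo ⟨by linarith [pi_pos], by linarith⟩).ne'
  show willmoreRatioQ 0 t t = y
  rw [willmoreRatioQ_zero_self hcos, ← ht, cos_arccos (by linarith) (by linarith)]
  ring

/-- The infimum of the energy ratio `Q` over `Φ` equals `1`. -/
theorem willmoreRatioQ_isGLB :
    IsGLB ((fun φ : ℝ × ℝ × ℝ => willmoreRatioQ φ.1 φ.2.1 φ.2.2) '' willmorePhi) 1 := by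
  refine (isGLB_Ioo one_lt_two).of_subset_of_superset isGLB_Ici
    Ioo_one_two_subset_image_willmoreRatioQ ?_
  rintro _ ⟨⟨φ₁, φ₂, φ₃⟩, ⟨-, -, h₂, h₂', h₃, h₃', h₂₃⟩, rfl⟩
  exact one_le_willmoreRatioQ φ₁ ⟨h₂, h₂'⟩ ⟨h₃, h₃'⟩ h₂₃
end

section
/- For the infinitesimal equilateral triangular lattice, i.e. φ₂ = φ₃ = π/3, the energy ratio is independent of the orientation φ₁ relative to the curvature directions and equals 3/2: for every real φ₁, Q(φ₁, π/3, π/3) = 3/2. -/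
open Real

/-- For the infinitesimal equilateral triangular lattice the energy ratio is
independent of the orientation `φ₁` and equals `3/2`. -/
theorem willmoreRatioQ_equilateral (φ₁ : ℝ) :
    willmoreRatioQ φ₁ (π / 3) (π / 3) = 3 / 2 := by
  have h1 : 2 * φ₁ + 2 * (π / 3) + π / 3 = 2 * φ₁ + π := by ring
  have h2 : π / 3 + π / 3 = π - π / 3 := by ring
  have h3 := sin_sq_add_cos_sq (2 * φ₁)
  rw [willmoreRatioQ, h1, h2, Real.cos_add_pi, Real.cos_pi_sub,
    Real.cos_pi_div_three]
  field_simp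
  nlinarith [h3]
end

section
/- Let l₁, l₂, l₃ > 0 and define β : ℝ → ℝ by β(θ) = Real.arccos ((l₃²·cos θ − l₁·l₂) / (Real.sqrt (l₁² + l₃²) · Real.sqrt (l₂² + l₃²))). Then as θ → 0, β(θ) = β(0) + (l₃ / (2·(l₁ + l₂)))·θ² + o(|θ|³); i.e. the function θ ↦ β(θ) − β(0) − (l₃/(2(l₁+l₂)))·θ² is o(|θ|³) with respect to the filter 𝓝 0. (Here 2l₃ = l is the length of the common edge of two adjacent triangles, l₁, l₂ are the distances from its midpoint to the two circumcenters, L = l₁ + l₂ is the distance between the circumcenters, θ is the dihedral bending angle, and β(θ) is the external intersection angle of the two circumcircles, so that β(θ) = β(0) + (l/(4L))θ² + o(θ³).) -/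
/-!
Write `β(θ) = H(cos θ)` with `H x = arccos ((l₃² x − l₁l₂)/(r₁r₂))`. Since
`r₁²r₂² − (l₃² − l₁l₂)² = l₃²(l₁ + l₂)²`, the argument of `arccos` at `x = 1` lies strictly
inside `(-1, 1)`, so `H` is smooth at `1` with `H'(1) = −l₃/(l₁ + l₂)`. The first-order Taylor
remainder of `H` at `1` is `O((cos θ − 1)²) = O(θ⁴)`, and `cos θ = 1 − θ²/2 + O(θ⁴)`, hence
`β(θ) − β(0) = −H'(1) θ²/2 + O(θ⁴)`.
-/

open Real Filter Asymptotics Set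

section TaylorRemainder

variable {E : Type*} [NormedAddCommGroup E] [NormedSpace ℝ E]

theorem isBigO_sub_sub_smul_sq_of_hasDerivAt {f f' : ℝ → E} {a : ℝ}
    (hf : ∀ᶠ x in nhds a, HasDerivAt f (f' x) x)
    (hf' : (fun x => f' x - f' a) =O[nhds a] fun x => x - a) :
    (fun x => f x - f a - (x - a) • f' a) =O[nhds a] fun x => (x - a) ^ 2 := by
  obtain ⟨C, hC₀, hC⟩ := hf'.exists_nonneg
  have hseg : ∀ᶠ x in nhds a, ∀ y ∈ segment ℝ a x,
      HasDerivAt f (f' y) y ∧ ‖f' y - f' a‖ ≤ C * ‖y - a‖ := by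
    simpa only [nhdsWithin_univ] using convex_univ.eventually_nhdsWithin_segment (mem_univ a)
      (by simpa only [nhdsWithin_univ] using hf.and hC.bound)
  refine IsBigO.of_bound C ?_
  filter_upwards [hseg] with x hx
  have hderiv : ∀ y ∈ segment ℝ a x,
      HasDerivWithinAt (fun y => f y - y • f' a) (f' y - f' a) (segment ℝ a x) y := fun y hy =>
    ((hx y hy).1.sub (by simpa using (hasDerivAt_id y).smul_const (f' a))).hasDerivWithinAt
  have hbound : ∀ y ∈ segment ℝ a x, ‖f' y - f' a‖ ≤ C * ‖x - a‖ := fun y hy =>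
    (hx y hy).2.trans (by gcongr; exact norm_sub_le_of_mem_segment hy)
  have hmvt := (convex_segment a x).norm_image_sub_le_of_norm_hasDerivWithin_le hderiv hbound
    (left_mem_segment ℝ a x) (right_mem_segment ℝ a x)
  calc ‖f x - f a - (x - a) • f' a‖ = ‖(f x - x • f' a) - (f a - a • f' a)‖ := by
        rw [sub_smul]; congr 1; abel
    _ ≤ C * ‖x - a‖ * ‖x - a‖ := hmvt
    _ = C * ‖(x - a) ^ 2‖ := by rw [norm_pow]; ring

theorem ContDiffAt.isBigO_sub_sub_smul_deriv {f : ℝ → E} {a : ℝ} (hf : ContDiffAt ℝ 2 f a) :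
    (fun x => f x - f a - (x - a) • deriv f a) =O[nhds a] fun x => (x - a) ^ 2 :=
  isBigO_sub_sub_smul_sq_of_hasDerivAt
    ((hf.eventually (by simp)).mono fun _ hx => (hx.differentiableAt two_ne_zero).hasDerivAt)
    ((hf.derivWithin (m := 1) (by norm_num)).differentiableAt one_ne_zero).hasDerivAt.isBigO_sub

end TaylorRemainder

theorem cos_sub_one_add_sq_div_two_isBigO :
    (fun θ : ℝ => cos θ - 1 + θ ^ 2 / 2) =O[nhds 0] fun θ => θ ^ 4 := by
  refine IsBigO.of_bound (5 / 96) ?_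
  filter_upwards [Metric.closedBall_mem_nhds (0 : ℝ) one_pos] with θ hθ
  rw [Metric.mem_closedBall, dist_zero_right] at hθ
  calc ‖cos θ - 1 + θ ^ 2 / 2‖ = |cos θ - (1 - θ ^ 2 / 2)| := by rw [norm_eq_abs]; ring_nf
    _ ≤ |θ| ^ 4 * (5 / 96) := cos_bound hθ
    _ = 5 / 96 * ‖θ ^ 4‖ := by rw [norm_pow, norm_eq_abs]; ring

theorem cos_sub_one_isBigO_sq : (fun θ : ℝ => cos θ - 1) =O[nhds 0] fun θ => θ ^ 2 := by
  have h := (cos_sub_one_add_sq_div_two_isBigO.trans (isLittleO_pow_pow (by norm_num)).isBigO).sub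
    ((isBigO_refl (fun θ : ℝ => θ ^ 2) _).const_mul_left (1 / 2))
  refine h.congr_left fun θ => ?_
  ring

section IntersectionAngle

variable {l₁ l₂ l₃ : ℝ}

/-- `cos β` as a function of `x = cos θ`. -/
noncomputable def intersectionAngleCos (l₁ l₂ l₃ x : ℝ) : ℝ :=
  (l₃ ^ 2 * x - l₁ * l₂) / (sqrt (l₁ ^ 2 + l₃ ^ 2) * sqrt (l₂ ^ 2 + l₃ ^ 2))

theorem one_sub_intersectionAngleCos_one_sq (h₃ : l₃ ≠ 0) :
    1 - intersectionAngleCos l₁ l₂ l₃ 1 ^ 2 =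
      (l₃ * (l₁ + l₂) / (sqrt (l₁ ^ 2 + l₃ ^ 2) * sqrt (l₂ ^ 2 + l₃ ^ 2))) ^ 2 := by
  have hA : sqrt (l₁ ^ 2 + l₃ ^ 2) * sqrt (l₂ ^ 2 + l₃ ^ 2) ≠ 0 := by positivity
  rw [intersectionAngleCos, div_pow, div_pow, mul_pow, sq_sqrt (by positivity),
    sq_sqrt (by positivity)]
  field_simp
  ring

theorem abs_intersectionAngleCos_one_lt_one (h₃ : l₃ ≠ 0) (hL : l₁ + l₂ ≠ 0) :
    |intersectionAngleCos l₁ l₂ l₃ 1| < 1 := by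
  rw [← sq_lt_one_iff_abs_lt_one, ← sub_pos, one_sub_intersectionAngleCos_one_sq h₃]
  positivity

theorem contDiffAt_arccos_intersectionAngleCos {n : WithTop ℕ∞} (h₃ : l₃ ≠ 0)
    (hL : l₁ + l₂ ≠ 0) : ContDiffAt ℝ n (fun x => arccos (intersectionAngleCos l₁ l₂ l₃ x)) 1 := by
  obtain ⟨hlo, hhi⟩ := abs_lt.mp (abs_intersectionAngleCos_one_lt_one h₃ hL)
  exact (contDiffAt_arccos hlo.ne' hhi.ne).comp 1 (by unfold intersectionAngleCos; fun_prop)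

theorem hasDerivAt_arccos_intersectionAngleCos (h₃ : 0 < l₃) (hL : 0 < l₁ + l₂) :
    HasDerivAt (fun x => arccos (intersectionAngleCos l₁ l₂ l₃ x)) (-(l₃ / (l₁ + l₂))) 1 := by
  set A := sqrt (l₁ ^ 2 + l₃ ^ 2) * sqrt (l₂ ^ 2 + l₃ ^ 2) with hA_def
  have hA : 0 < A := by positivity
  obtain ⟨hlo, hhi⟩ := abs_lt.mp (abs_intersectionAngleCos_one_lt_one h₃.ne' hL.ne')
  have hu : HasDerivAt (fun x => (l₃ ^ 2 * x - l₁ * l₂) / A) (l₃ ^ 2 / A) 1 := by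
    simpa using (((hasDerivAt_id (1 : ℝ)).const_mul (l₃ ^ 2)).sub_const (l₁ * l₂)).div_const A
  refine ((hasDerivAt_arccos hlo.ne' hhi.ne).comp 1 hu).congr_deriv ?_
  rw [one_sub_intersectionAngleCos_one_sq h₃.ne', ← hA_def, sqrt_sq (by positivity)]
  field_simp

end IntersectionAngle

/-- Asymptotics of the external intersection angle `β(θ)` of the circumcircles
of two adjacent triangles as the dihedral bending angle `θ → 0`:
`β(θ) = β(0) + (l₃/(2(l₁+l₂)))·θ² + o(|θ|³)`. -/
theorem bending_angle_asymptotics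
    (l₁ l₂ l₃ : ℝ) (h₁ : 0 < l₁) (h₂ : 0 < l₂) (h₃ : 0 < l₃)
    (β : ℝ → ℝ)
    (hβ : ∀ θ : ℝ, β θ =
      arccos ((l₃ ^ 2 * cos θ - l₁ * l₂) / (sqrt (l₁ ^ 2 + l₃ ^ 2) * sqrt (l₂ ^ 2 + l₃ ^ 2)))) :
    (fun θ : ℝ => β θ - β 0 - (l₃ / (2 * (l₁ + l₂))) * θ ^ 2) =o[nhds 0]
      (fun θ : ℝ => |θ| ^ 3) := by
  have hL : 0 < l₁ + l₂ := add_pos h₁ h₂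
  set H := fun x => arccos (intersectionAngleCos l₁ l₂ l₃ x)
  have hH' : deriv H 1 = -(l₃ / (l₁ + l₂)) := (hasDerivAt_arccos_intersectionAngleCos h₃ hL).deriv
  have hcos : Tendsto cos (nhds 0) (nhds 1) := by simpa using continuous_cos.tendsto 0
  have hθ4 : (fun θ : ℝ => θ ^ 4) =o[nhds 0] fun θ => θ ^ 3 := isLittleO_pow_pow (by norm_num)
  have hremainder : (fun θ => H (cos θ) - H 1 - (cos θ - 1) * deriv H 1) =o[nhds 0]
      fun θ => θ ^ 3 :=
    ((contDiffAt_arccos_intersectionAngleCos h₃.ne' hL.ne').isBigO_sub_sub_smul_deriv.comp_tendsto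
      hcos |>.trans (cos_sub_one_isBigO_sq.pow 2) |>.trans_isLittleO
      (by simpa only [← pow_mul] using hθ4))
  have hquadratic : (fun θ => deriv H 1 * (cos θ - 1 + θ ^ 2 / 2)) =o[nhds 0] fun θ => θ ^ 3 :=
    (cos_sub_one_add_sq_div_two_isBigO.trans_isLittleO hθ4).const_mul_left _
  simp only [pow_abs, isLittleO_abs_right]
  refine (hremainder.add hquadratic).congr_left fun θ => ?_
  rw [hβ, hβ, cos_zero, hH']
  simp only [H, intersectionAngleCos]
  field_simp
  ring
end

section
/- (Miquel's theorem, planar version) Let A, B, C be affinely independent points in EuclideanSpace ℝ (Fin 2), and let A' be a point on the line through B and C, B' a point on the line through C and A, and C' a point on the line through A and B, such that each of the triples (A, B', C'), (B, C', A'), (C, A', B') is affinely independent. Then the circumcircles of the three triangles A B' C', B C' A', C A' B' have a common point: there exists a point M lying on all three circumcircles. -/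
/-!
Work with oriented angles modulo `π`. Since `A'`, `B'`, `C'` lie on the sides, the angle sum of
`ABC` gives `2∡B'AC' + 2∡C'BA' = 2∡B'CA'`. Reflecting `C'` in the line through the centres of the
first two circles gives a second common point `M` of those circles (`M = C'` when they are
tangent). Inscribed angles on the two circles give `2∡B'MA' = 2∡B'AC' + 2∡C'BA'`; in the tangent
case the tangent–chord angles at `C'` play the same role. Hence `2∡B'MA' = 2∡B'CA'`, so `M` lies
on the circle `CA'B'`.
-/

open EuclideanGeometry Affine Module

section

variable {k V P : Type*} [Ring k] [AddCommGroup V] [Module k V] [AddTorsor V P]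

theorem ne_of_mem_affineSpan_pair_of_ne {a b p : P} (h : p ∈ line[k, a, b]) (hp : p ≠ a) :
    a ≠ b := by
  rintro rfl
  rw [Set.pair_eq_singleton, AffineSubspace.mem_affineSpan_singleton] at h
  exact hp h

end

namespace EuclideanGeometry

variable {V P : Type*} [NormedAddCommGroup V] [InnerProductSpace ℝ V] [MetricSpace P]
  [NormedAddTorsor V P]

theorem reflection_mem_sphere {s : Sphere P} {S : AffineSubspace ℝ P} [Nonempty S]
    [S.direction.HasOrthogonalProjection] (hc : s.center ∈ S) {p : P} (hp : p ∈ s) :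
    reflection S p ∈ s := by
  rwa [mem_sphere', dist_reflection_eq_of_mem S hc, ← mem_sphere']

variable [Fact (finrank ℝ V = 2)] [Module.Oriented ℝ V (Fin 2)]

theorem two_zsmul_oangle_add_two_zsmul_oangle_of_mem_affineSpan_pair {a b c a' b' c' : P}
    (ha' : a' ∈ line[ℝ, b, c]) (hb' : b' ∈ line[ℝ, c, a]) (hc' : c' ∈ line[ℝ, a, b])
    (hab' : a ≠ b') (hac' : a ≠ c') (hbc' : b ≠ c') (hba' : b ≠ a') (hca' : c ≠ a')
    (hcb' : c ≠ b') :
    (2 : ℤ) • ∡ b' a c' + (2 : ℤ) • ∡ c' b a' = (2 : ℤ) • ∡ b' c a' := by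
  have hab : a ≠ b := ne_of_mem_affineSpan_pair_of_ne hc' hac'.symm
  have hbc : b ≠ c := ne_of_mem_affineSpan_pair_of_ne ha' hba'.symm
  have hca : c ≠ a := ne_of_mem_affineSpan_pair_of_ne hb' hcb'.symm
  have col_a' : Collinear ℝ {a', b, c} := collinear_insert_of_mem_affineSpan_pair ha'
  have col_b' : Collinear ℝ {b', c, a} := collinear_insert_of_mem_affineSpan_pair hb'
  have col_c' : Collinear ℝ {c', a, b} := collinear_insert_of_mem_affineSpan_pair hc'
  have angle_a : (2 : ℤ) • ∡ b' a c' = (2 : ℤ) • ∡ c a b := by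
    have col : Collinear ℝ {b', a, c} := by rwa [Set.pair_comm]
    rw [col.two_zsmul_oangle_eq_left hab'.symm hca,
      col_c'.two_zsmul_oangle_eq_right hac'.symm hab.symm]
  have angle_b : (2 : ℤ) • ∡ c' b a' = (2 : ℤ) • ∡ a b c := by
    have col : Collinear ℝ {c', b, a} := by rwa [Set.pair_comm]
    rw [col.two_zsmul_oangle_eq_left hbc'.symm hab,
      col_a'.two_zsmul_oangle_eq_right hba'.symm hbc.symm]
  have angle_c : (2 : ℤ) • ∡ b' c a' = (2 : ℤ) • ∡ a c b := by
    have col : Collinear ℝ {a', c, b} := by rwa [Set.pair_comm]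
    rw [col_b'.two_zsmul_oangle_eq_left hcb'.symm hca.symm,
      col.two_zsmul_oangle_eq_right hca'.symm hbc]
  have angle_sum := congrArg ((2 : ℤ) • ·)
    (oangle_add_oangle_add_oangle_eq_pi hab.symm hbc.symm hca.symm)
  simp only [smul_add, Real.Angle.two_zsmul_coe_pi] at angle_sum
  rw [angle_a, angle_b, angle_c, oangle_rev b c a, smul_neg, eq_neg_iff_add_eq_zero, ← angle_sum]
  abel

namespace Sphere

variable {s₁ s₂ : Sphere P} {p a x b y : P}

theorem two_zsmul_oangle_eq_add_of_mem_inter {m : P} (hp₁ : p ∈ s₁) (hp₂ : p ∈ s₂)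
    (hm₁ : m ∈ s₁) (hm₂ : m ∈ s₂) (ha : a ∈ s₁) (hx : x ∈ s₁) (hb : b ∈ s₂) (hy : y ∈ s₂)
    (hap : a ≠ p) (hax : a ≠ x) (hbp : b ≠ p) (hby : b ≠ y) (hmp : m ≠ p) (hmx : m ≠ x)
    (hmy : m ≠ y) :
    (2 : ℤ) • ∡ x m y = (2 : ℤ) • ∡ x a p + (2 : ℤ) • ∡ p b y := by
  rw [two_zsmul_oangle_eq hx ha hm₁ hp₁ hax hap hmx hmp,
    two_zsmul_oangle_eq hp₂ hb hm₂ hy hbp hby hmp hmy, ← smul_add,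
    oangle_add hmx.symm hmp.symm hmy.symm]

theorem two_zsmul_oangle_eq_add_of_mem_affineSpan_centers
    (hpc : p ∈ line[ℝ, s₁.center, s₂.center]) (hp₁ : p ∈ s₁) (hp₂ : p ∈ s₂)
    (ha : a ∈ s₁) (hx : x ∈ s₁) (hb : b ∈ s₂) (hy : y ∈ s₂)
    (hap : a ≠ p) (hax : a ≠ x) (hxp : x ≠ p) (hbp : b ≠ p) (hby : b ≠ y) (hyp : y ≠ p) :
    (2 : ℤ) • ∡ x p y = (2 : ℤ) • ∡ x a p + (2 : ℤ) • ∡ p b y := by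
  have hc₁ : s₁.center ≠ p := (ne_center_of_mem_of_mem_of_ne hp₁ ha hap.symm).symm
  have hc₂ : s₂.center ≠ p := (ne_center_of_mem_of_mem_of_ne hp₂ hb hbp.symm).symm
  have col : Collinear ℝ {s₁.center, p, s₂.center} := by
    rw [Set.insert_comm]; exact collinear_insert_of_mem_affineSpan_pair hpc
  have tangent₁ := two_zsmul_oangle_center_add_two_zsmul_oangle_eq_pi hp₁ ha hx hap hax hxp.symm
  have tangent₂ := two_zsmul_oangle_center_add_two_zsmul_oangle_eq_pi hp₂ hb hy hbp hby hyp.symm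
  rw [← oangle_add hxp hc₁ hyp, smul_add, col.two_zsmul_oangle_eq_left hc₁ hc₂,
    oangle_rev y p s₂.center, oangle_rev p a x, smul_neg, smul_neg,
    eq_sub_of_add_eq tangent₁, eq_sub_of_add_eq tangent₂]
  abel

theorem two_zsmul_oangle_reflection_eq_add (hp₁ : p ∈ s₁) (hp₂ : p ∈ s₂)
    (ha : a ∈ s₁) (hx : x ∈ s₁) (hb : b ∈ s₂) (hy : y ∈ s₂)
    (hap : a ≠ p) (hax : a ≠ x) (hxp : x ≠ p) (hbp : b ≠ p) (hby : b ≠ y) (hyp : y ≠ p)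
    (hmx : reflection line[ℝ, s₁.center, s₂.center] p ≠ x)
    (hmy : reflection line[ℝ, s₁.center, s₂.center] p ≠ y) :
    (2 : ℤ) • ∡ x (reflection line[ℝ, s₁.center, s₂.center] p) y =
      (2 : ℤ) • ∡ x a p + (2 : ℤ) • ∡ p b y := by
  by_cases hmp : reflection line[ℝ, s₁.center, s₂.center] p = p
  · rw [hmp]
    exact two_zsmul_oangle_eq_add_of_mem_affineSpan_centers ((reflection_eq_self_iff p).1 hmp)
      hp₁ hp₂ ha hx hb hy hap hax hxp hbp hby hyp
  · exact two_zsmul_oangle_eq_add_of_mem_inter hp₁ hp₂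
      (reflection_mem_sphere (left_mem_affineSpan_pair ℝ _ _) hp₁)
      (reflection_mem_sphere (right_mem_affineSpan_pair ℝ _ _) hp₂)
      ha hx hb hy hap hax hbp hby hmp hmx hmy

end Sphere

end EuclideanGeometry

theorem miquel_planar_general
    (A B C A' B' C' : EuclideanSpace ℝ (Fin 2))
    (hA' : A' ∈ affineSpan ℝ ({B, C} : Set (EuclideanSpace ℝ (Fin 2))))
    (hB' : B' ∈ affineSpan ℝ ({C, A} : Set (EuclideanSpace ℝ (Fin 2))))
    (hC' : C' ∈ affineSpan ℝ ({A, B} : Set (EuclideanSpace ℝ (Fin 2))))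
    (h₁ : AffineIndependent ℝ ![A, B', C'])
    (h₂ : AffineIndependent ℝ ![B, C', A'])
    (h₃ : AffineIndependent ℝ ![C, A', B']) :
    ∃ M : EuclideanSpace ℝ (Fin 2),
      dist M (Simplex.circumcenter ⟨![A, B', C'], h₁⟩) =
          Simplex.circumradius (⟨![A, B', C'], h₁⟩ : Simplex ℝ (EuclideanSpace ℝ (Fin 2)) 2) ∧
      dist M (Simplex.circumcenter ⟨![B, C', A'], h₂⟩) =
          Simplex.circumradius (⟨![B, C', A'], h₂⟩ : Simplex ℝ (EuclideanSpace ℝ (Fin 2)) 2) ∧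
      dist M (Simplex.circumcenter ⟨![C, A', B'], h₃⟩) =
          Simplex.circumradius (⟨![C, A', B'], h₃⟩ : Simplex ℝ (EuclideanSpace ℝ (Fin 2)) 2) := by
  have : Fact (finrank ℝ (EuclideanSpace ℝ (Fin 2)) = 2) := ⟨finrank_euclideanSpace_fin⟩
  have : Module.Oriented ℝ (EuclideanSpace ℝ (Fin 2)) (Fin 2) :=
    ⟨(EuclideanSpace.basisFun (Fin 2) ℝ).toBasis.orientation⟩
  set T₁ : Triangle ℝ (EuclideanSpace ℝ (Fin 2)) := ⟨![A, B', C'], h₁⟩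
  set T₂ : Triangle ℝ (EuclideanSpace ℝ (Fin 2)) := ⟨![B, C', A'], h₂⟩
  set T₃ : Triangle ℝ (EuclideanSpace ℝ (Fin 2)) := ⟨![C, A', B'], h₃⟩
  have n₁ := affineIndependent_iff_not_collinear_set.1 h₁
  have n₂ := affineIndependent_iff_not_collinear_set.1 h₂
  have n₃ := affineIndependent_iff_not_collinear_set.1 h₃
  set M := reflection line[ℝ, T₁.circumcenter, T₂.circumcenter] C'
  refine ⟨M, reflection_mem_sphere (left_mem_affineSpan_pair ℝ _ _) (T₁.mem_circumsphere 2),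
    reflection_mem_sphere (right_mem_affineSpan_pair ℝ _ _) (T₂.mem_circumsphere 1), ?_⟩
  by_cases hMA' : M = A'
  · exact hMA' ▸ T₃.mem_circumsphere 1
  by_cases hMB' : M = B'
  · exact hMB' ▸ T₃.mem_circumsphere 2
  refine T₃.mem_circumsphere_of_two_zsmul_oangle_eq (i₁ := 2) (i₂ := 0) (i₃ := 1)
    (by decide) (by decide) (by decide) ?_
  calc (2 : ℤ) • ∡ B' M A' = (2 : ℤ) • ∡ B' A C' + (2 : ℤ) • ∡ C' B A' :=
        Sphere.two_zsmul_oangle_reflection_eq_add (T₁.mem_circumsphere 2)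
          (T₂.mem_circumsphere 1) (T₁.mem_circumsphere 0) (T₁.mem_circumsphere 1)
          (T₂.mem_circumsphere 0) (T₂.mem_circumsphere 2) (ne₁₃_of_not_collinear n₁)
          (ne₁₂_of_not_collinear n₁) (ne₂₃_of_not_collinear n₁) (ne₁₂_of_not_collinear n₂)
          (ne₁₃_of_not_collinear n₂) (ne₂₃_of_not_collinear n₂).symm hMB' hMA'
    _ = (2 : ℤ) • ∡ B' C A' :=
        two_zsmul_oangle_add_two_zsmul_oangle_of_mem_affineSpan_pair hA' hB' hC'
          (ne₁₂_of_not_collinear n₁) (ne₁₃_of_not_collinear n₁) (ne₁₂_of_not_collinear n₂)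
          (ne₁₃_of_not_collinear n₂) (ne₁₂_of_not_collinear n₃) (ne₁₃_of_not_collinear n₃)

/-- Miquel's theorem, planar version: the circumcircles of the triangles
`A B' C'`, `B C' A'`, `C A' B'` have a common point. -/
theorem miquel_planar
    (A B C A' B' C' : EuclideanSpace ℝ (Fin 2))
    (hABC : AffineIndependent ℝ ![A, B, C])
    (hA' : A' ∈ affineSpan ℝ ({B, C} : Set (EuclideanSpace ℝ (Fin 2))))
    (hB' : B' ∈ affineSpan ℝ ({C, A} : Set (EuclideanSpace ℝ (Fin 2))))
    (hC' : C' ∈ affineSpan ℝ ({A, B} : Set (EuclideanSpace ℝ (Fin 2))))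
    (h₁ : AffineIndependent ℝ ![A, B', C'])
    (h₂ : AffineIndependent ℝ ![B, C', A'])
    (h₃ : AffineIndependent ℝ ![C, A', B']) :
    ∃ M : EuclideanSpace ℝ (Fin 2),
      dist M (Simplex.circumcenter ⟨![A, B', C'], h₁⟩) =
          Simplex.circumradius (⟨![A, B', C'], h₁⟩ : Simplex ℝ (EuclideanSpace ℝ (Fin 2)) 2) ∧
      dist M (Simplex.circumcenter ⟨![B, C', A'], h₂⟩) =
          Simplex.circumradius (⟨![B, C', A'], h₂⟩ : Simplex ℝ (EuclideanSpace ℝ (Fin 2)) 2) ∧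
      dist M (Simplex.circumcenter ⟨![C, A', B'], h₃⟩) =
          Simplex.circumradius (⟨![C, A', B'], h₃⟩ : Simplex ℝ (EuclideanSpace ℝ (Fin 2)) 2) :=
  miquel_planar_general A B C A' B' C' hA' hB' hC' h₁ h₂ h₃
end

section
/- If the three faces of a combinatorial cube adjacent to the vertex x000 are circular, i.e. the quadruples {x000,x100,x110,x010}, {x000,x100,x101,x001}, {x000,x010,x011,x001} are each Concyclic, and the seven vertices x000, x100, x010, x001, x110, x101, x011 are pairwise distinct and not coplanar, then these seven vertices lie on a common sphere, i.e. the set {x000, x100, x010, x001, x110, x101, x011} is Cospherical. -/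
/-!
The four vertices `x000, x100, x010, x001` are not coplanar: each face at `x000` lies in the plane
of its three vertices among them, so otherwise all seven points would be coplanar. Let `S` be
their circumsphere. A sphere meets the plane of three of its points in the circle through them, so
every concyclic face, having three vertices on `S`, lies on `S`.
-/

open EuclideanGeometry

theorem Matrix.range_cons_three {α : Type*} (a b c : α) : Set.range ![a, b, c] = {a, b, c} := by
  simp only [Matrix.range_cons, Matrix.range_empty, Set.union_empty, Set.singleton_union]

section Coplanar

open Module

variable {k V P : Type*} [DivisionRing k] [AddCommGroup V] [Module k V] [AddTorsor V P]

theorem Coplanar.affineSpan_eq_of_affineIndependent {s : Set P} (hs : Coplanar k s)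
    {p : Fin 3 → P} (hp : AffineIndependent k p) (hps : Set.range p ⊆ s) :
    affineSpan k (Set.range p) = affineSpan k s := by
  have := hs.finiteDimensional_vectorSpan
  have := hs.finiteDimensional_direction_affineSpan
  refine hp.affineSpan_eq_of_le_of_card_eq_finrank_add_one (affineSpan_mono k hps) ?_
  have hp₂ : finrank k (vectorSpan k (Set.range p)) = 2 := hp.finrank_vectorSpan (by simp)
  have hle := Submodule.finrank_mono (vectorSpan_mono k hps)
  have hs₂ := hs.finrank_le_two
  rw [direction_affineSpan, Fintype.card_fin]
  omega

theorem Coplanar.of_subset_affineSpan {s t : Set P} (hs : Coplanar k s)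
    (hts : t ⊆ affineSpan k s) : Coplanar k t := by
  have h := vectorSpan_mono k hts
  rw [← AffineSubspace.direction, direction_affineSpan] at h
  exact (Submodule.rank_mono h).trans hs

theorem affineIndependent_of_not_coplanar_range {p : Fin 4 → P}
    (h : ¬ Coplanar k (Set.range p)) : AffineIndependent k p := by
  rw [affineIndependent_iff_not_finrank_vectorSpan_le k p (n := 2) (by simp)]
  exact fun hle => h (coplanar_iff_finrank_le_two.2 hle)

end Coplanar

namespace EuclideanGeometry

variable {V P : Type*} [NormedAddCommGroup V] [InnerProductSpace ℝ V] [MetricSpace P]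
  [NormedAddTorsor V P] {ps : Set P}

theorem _root_.Affine.Simplex.subset_sphere_of_cospherical {n : ℕ} (t : Affine.Simplex ℝ P n)
    (hps : Cospherical ps) (hts : Set.range t.points ⊆ ps)
    (hspan : ps ⊆ affineSpan ℝ (Set.range t.points)) {S : Sphere P}
    (hS : Set.range t.points ⊆ S) : ps ⊆ S := by
  -- Both the centre of `ps` inside the span and the projection of `S.center` onto the span are
  -- the circumcentre of `t`.
  obtain ⟨c, hcA, r, hc⟩ := (cospherical_iff_exists_mem_of_finiteDimensional hspan).1 hps
  have hcc : c = t.circumcenter :=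
    t.eq_circumcenter_of_dist_eq hcA fun i => hc _ (hts ⟨i, rfl⟩)
  have hproj : orthogonalProjection (affineSpan ℝ (Set.range t.points)) S.center =
      t.circumcenter :=
    t.orthogonalProjection_eq_circumcenter_of_dist_eq fun i => mem_sphere.1 (hS ⟨i, rfl⟩)
  obtain ⟨r', hr'⟩ := (exists_dist_eq_iff_exists_dist_orthogonalProjection_eq hspan S.center).2
    ⟨r, by rwa [hproj, ← hcc]⟩
  intro p hp
  calc dist p S.center = dist (t.points 0) S.center := by rw [hr' p hp, hr' _ (hts ⟨0, rfl⟩)]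
    _ = S.radius := hS ⟨0, rfl⟩

variable {p₁ p₂ p₃ : P}

theorem Concyclic.subset_affineSpan_of_mem_of_ne (h : Concyclic ps) (h₁ : p₁ ∈ ps)
    (h₂ : p₂ ∈ ps) (h₃ : p₃ ∈ ps) (h₁₂ : p₁ ≠ p₂) (h₁₃ : p₁ ≠ p₃) (h₂₃ : p₂ ≠ p₃) :
    ps ⊆ affineSpan ℝ {p₁, p₂, p₃} := by
  rw [← Matrix.range_cons_three, Coplanar.affineSpan_eq_of_affineIndependent h.Coplanar
    (h.Cospherical.affineIndependent_of_mem_of_ne h₁ h₂ h₃ h₁₂ h₁₃ h₂₃)]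
  · exact subset_affineSpan ℝ ps
  · simp [Set.insert_subset_iff, h₁, h₂, h₃]

theorem Concyclic.subset_sphere_of_mem_of_ne (h : Concyclic ps) (h₁ : p₁ ∈ ps) (h₂ : p₂ ∈ ps)
    (h₃ : p₃ ∈ ps) (h₁₂ : p₁ ≠ p₂) (h₁₃ : p₁ ≠ p₃) (h₂₃ : p₂ ≠ p₃) {S : Sphere P}
    (hS : {p₁, p₂, p₃} ⊆ (S : Set P)) : ps ⊆ S := by
  let t : Affine.Simplex ℝ P 2 :=
    ⟨![p₁, p₂, p₃], h.Cospherical.affineIndependent_of_mem_of_ne h₁ h₂ h₃ h₁₂ h₁₃ h₂₃⟩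
  have ht : Set.range t.points = {p₁, p₂, p₃} := Matrix.range_cons_three p₁ p₂ p₃
  refine t.subset_sphere_of_cospherical h.Cospherical ?_ ?_ (ht ▸ hS)
  · simp [ht, Set.insert_subset_iff, h₁, h₂, h₃]
  · exact ht ▸ h.subset_affineSpan_of_mem_of_ne h₁ h₂ h₃ h₁₂ h₁₃ h₂₃

end EuclideanGeometry

/-- If the three faces of a combinatorial cube adjacent to the vertex `x000`
are circular, and the seven vertices other than `x111` are pairwise distinct
and not coplanar, then these seven vertices lie on a common sphere. -/
theorem miquel_cube_seven_cospherical
    (x000 x100 x010 x001 x110 x101 x011 : EuclideanSpace ℝ (Fin 3))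
    (hdist : List.Pairwise (· ≠ ·) [x000, x100, x010, x001, x110, x101, x011])
    (hncop : ¬ Coplanar ℝ ({x000, x100, x010, x001, x110, x101, x011} :
      Set (EuclideanSpace ℝ (Fin 3))))
    (hf₁ : Concyclic ({x000, x100, x110, x010} : Set (EuclideanSpace ℝ (Fin 3))))
    (hf₂ : Concyclic ({x000, x100, x101, x001} : Set (EuclideanSpace ℝ (Fin 3))))
    (hf₃ : Concyclic ({x000, x010, x011, x001} : Set (EuclideanSpace ℝ (Fin 3)))) :
    Cospherical ({x000, x100, x010, x001, x110, x101, x011} :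
      Set (EuclideanSpace ℝ (Fin 3))) := by
  obtain ⟨⟨h₁, h₂, h₃, -⟩, ⟨h₁₂, h₁₃, -⟩, ⟨h₂₃, -⟩, -⟩ : _ ∧ _ ∧ _ ∧ _ := by
    simpa [List.pairwise_cons] using hdist
  set base := Set.range ![x000, x100, x010, x001]
  have face : ∀ {ps : Set (EuclideanSpace ℝ (Fin 3))} {a b c}, Concyclic ps → a ∈ ps → b ∈ ps →
      c ∈ ps → a ≠ b → a ≠ c → b ≠ c → {a, b, c} ⊆ base →
      ps ⊆ affineSpan ℝ base ∧ ∀ S : Sphere (EuclideanSpace ℝ (Fin 3)), base ⊆ S → ps ⊆ S :=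
    fun h ha hb hc hab hac hbc hsub =>
      ⟨(h.subset_affineSpan_of_mem_of_ne ha hb hc hab hac hbc).trans (affineSpan_mono ℝ hsub),
        fun _ hS => h.subset_sphere_of_mem_of_ne ha hb hc hab hac hbc (hsub.trans hS)⟩
  obtain ⟨hspan₁, hsphere₁⟩ := face hf₁ (by simp) (by simp) (by simp) h₁ h₂ h₁₂
    (by simp [base, Set.insert_subset_iff])
  obtain ⟨hspan₂, hsphere₂⟩ := face hf₂ (by simp) (by simp) (by simp) h₁ h₃ h₁₃
    (by simp [base, Set.insert_subset_iff])
  obtain ⟨hspan₃, hsphere₃⟩ := face hf₃ (by simp) (by simp) (by simp) h₂ h₃ h₂₃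
    (by simp [base, Set.insert_subset_iff])
  have hfaces : ({x000, x100, x010, x001, x110, x101, x011} : Set (EuclideanSpace ℝ (Fin 3))) ⊆
      {x000, x100, x110, x010} ∪ {x000, x100, x101, x001} ∪ {x000, x010, x011, x001} := by
    intro x
    simp only [Set.mem_insert_iff, Set.mem_singleton_iff, Set.mem_union]
    tauto
  let T : Affine.Simplex ℝ (EuclideanSpace ℝ (Fin 3)) 3 :=
    ⟨_, affineIndependent_of_not_coplanar_range fun hcop => hncop <| hcop.of_subset_affineSpan <|
      hfaces.trans (Set.union_subset (Set.union_subset hspan₁ hspan₂) hspan₃)⟩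
  have hbase : base ⊆ T.circumsphere := Set.range_subset_iff.2 T.mem_circumsphere
  exact cospherical_iff_exists_sphere.2 ⟨T.circumsphere, hfaces.trans <| Set.union_subset
    (Set.union_subset (hsphere₁ _ hbase) (hsphere₂ _ hbase)) (hsphere₃ _ hbase)⟩
end

section
/- (Miquel's theorem for the cube) Let x000, x100, x010, x001, x110, x101, x011, x111 be the vertices of a combinatorial cube in EuclideanSpace ℝ (Fin 3). Assume: (i) the seven vertices other than x111 are pairwise distinct and not coplanar; (ii) the three faces at x000, namely {x000,x100,x110,x010}, {x000,x100,x101,x001}, {x000,x010,x011,x001}, are each Concyclic; (iii) the three faces at x111, namely {x100,x110,x111,x101}, {x010,x110,x111,x011}, {x001,x101,x111,x011}, are each Coplanar; (iv) the three planes affineSpan ℝ {x100,x110,x101}, affineSpan ℝ {x010,x110,x011}, affineSpan ℝ {x001,x101,x011} have exactly one common point. Then the three faces at x111 are also circular: each of the three quadruples in (iii) is Concyclic. -/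
open EuclideanGeometry
open scoped RealInnerProductSpace

section MiquelAux

variable {E : Type*} [NormedAddCommGroup E] [InnerProductSpace ℝ E] [FiniteDimensional ℝ E]

private lemma miquel_vectorSpan_quad (p1 p2 p3 p4 : E) :
    vectorSpan ℝ ({p1, p2, p3, p4} : Set _)
      = Submodule.span ℝ {p2 - p1, p3 - p1, p4 - p1} := by
  rw [vectorSpan_eq_span_vsub_set_right ℝ (Set.mem_insert p1 {p2, p3, p4})]
  simp only [Set.image_insert_eq, Set.image_singleton, vsub_eq_sub, sub_self]
  exact Submodule.span_insert_zero

private lemma miquel_coplanar_extract {p1 p2 p3 p4 : E}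
    (hcop : Coplanar ℝ ({p1, p2, p3, p4} : Set _))
    (hncol : ¬ Collinear ℝ ({p1, p2, p3} : Set _)) :
    ∃ β γ : ℝ, p4 - p1 = β • (p2 - p1) + γ • (p3 - p1) := by
  have h3 : vectorSpan ℝ ({p1, p2, p3} : Set _)
      = Submodule.span ℝ {p2 - p1, p3 - p1} := by
    rw [vectorSpan_eq_span_vsub_set_right ℝ (Set.mem_insert p1 {p2, p3})]
    simp only [Set.image_insert_eq, Set.image_singleton, vsub_eq_sub, sub_self]
    exact Submodule.span_insert_zero
  have hle : Submodule.span ℝ ({p2 - p1, p3 - p1} : Set _)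
      ≤ vectorSpan ℝ ({p1, p2, p3, p4} : Set _) := by
    rw [miquel_vectorSpan_quad]
    exact Submodule.span_mono (by
      intro x hx
      rcases hx with h | h
      · simp [h]
      · rw [Set.mem_singleton_iff] at h; simp [h])
  have hfr2 : 2 ≤ Module.finrank ℝ (Submodule.span ℝ ({p2 - p1, p3 - p1} : Set _)) := by
    by_contra h
    push_neg at h
    apply hncol
    rw [collinear_iff_finrank_le_one, h3]
    omega
  have heq : Submodule.span ℝ ({p2 - p1, p3 - p1} : Set _)
      = vectorSpan ℝ ({p1, p2, p3, p4} : Set _) := by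
    apply Submodule.eq_of_le_of_finrank_le hle
    exact le_trans hcop.finrank_le_two hfr2
  have hmem : p4 - p1 ∈ vectorSpan ℝ ({p1, p2, p3, p4} : Set _) := by
    have := vsub_mem_vectorSpan ℝ
      (by simp : p4 ∈ ({p1, p2, p3, p4} : Set _)) (by simp : p1 ∈ ({p1, p2, p3, p4} : Set _))
    simpa [vsub_eq_sub] using this
  rw [← heq, Submodule.mem_span_pair] at hmem
  obtain ⟨β, γ, h⟩ := hmem
  exact ⟨β, γ, h.symm⟩

omit [FiniteDimensional ℝ E] in
private lemma miquel_dist_eq_of_inner_self {p o : E} {r : ℝ} (hr : 0 ≤ r)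
    (h : ⟪p - o, p - o⟫ = r ^ 2) : dist p o = r := by
  rw [dist_eq_norm]
  have h' : ‖p - o‖ ^ 2 = r ^ 2 := by rw [← real_inner_self_eq_norm_sq]; exact h
  nlinarith [norm_nonneg (p - o)]

omit [FiniteDimensional ℝ E] in
private lemma miquel_inner_self_of_dist {p o : E} {r : ℝ} (h : dist p o = r) :
    ⟪p - o, p - o⟫ = r ^ 2 := by
  rw [real_inner_self_eq_norm_sq, ← dist_eq_norm, h]

omit [FiniteDimensional ℝ E] in
private lemma miquel_cospherical_transfer {p1 p2 p3 p4 o : E} {r : ℝ}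
    (hco : Cospherical ({p1, p2, p3, p4} : Set _)) {β γ : ℝ}
    (hcombo : p4 - p1 = β • (p2 - p1) + γ • (p3 - p1))
    (h1 : dist p1 o = r) (h2 : dist p2 o = r) (h3 : dist p3 o = r) :
    dist p4 o = r := by
  obtain ⟨cc, ρ, hcc⟩ := hco
  have hr : 0 ≤ r := h1 ▸ dist_nonneg
  have hc1 := miquel_inner_self_of_dist (hcc p1 (by simp))
  have hc2 := miquel_inner_self_of_dist (hcc p2 (by simp))
  have hc3 := miquel_inner_self_of_dist (hcc p3 (by simp))
  have hc4 := miquel_inner_self_of_dist (hcc p4 (by simp))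
  have he1 := miquel_inner_self_of_dist h1
  have he2 := miquel_inner_self_of_dist h2
  have he3 := miquel_inner_self_of_dist h3
  apply miquel_dist_eq_of_inner_self hr
  have hp4 : p4 - o = (p1 - o) + β • (p2 - p1) + γ • (p3 - p1) := by
    rw [show p4 - o = (p4 - p1) + (p1 - o) by abel, hcombo]; abel
  have hp2 : p2 - p1 = (p2 - o) - (p1 - o) := by abel
  have hp3 : p3 - p1 = (p3 - o) - (p1 - o) := by abel
  have hq1 : p1 - cc = (p1 - o) - (cc - o) := by abel
  have hq2 : p2 - cc = (p2 - o) - (cc - o) := by abel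
  have hq3 : p3 - cc = (p3 - o) - (cc - o) := by abel
  have hq4 : p4 - cc = (p4 - o) - (cc - o) := by abel
  rw [hq1] at hc1
  rw [hq2] at hc2
  rw [hq3] at hc3
  rw [hq4, hp4, hp2, hp3] at hc4
  rw [hp4, hp2, hp3]
  set A1 := p1 - o with hA1
  set A2 := p2 - o with hA2
  set A3 := p3 - o with hA3
  set W := cc - o with hW
  simp only [inner_add_left, inner_add_right, inner_sub_left, inner_sub_right,
    real_inner_smul_left, real_inner_smul_right] at hc1 hc2 hc3 hc4 ⊢
  simp only [real_inner_comm A2 A1, real_inner_comm A3 A1, real_inner_comm A3 A2,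
    real_inner_comm W A1, real_inner_comm W A2, real_inner_comm W A3] at hc1 hc2 hc3 hc4 ⊢
  linear_combination hc4 + (1 - β - γ) * he1 - (1 - β - γ) * hc1 + β * he2 - β * hc2
    + γ * he3 - γ * hc3

omit [FiniteDimensional ℝ E] in
private lemma miquel_ncol {s : Set E} (hs : Cospherical s) {p1 p2 p3 : E}
    (h1 : p1 ∈ s) (h2 : p2 ∈ s) (h3 : p3 ∈ s)
    (h12 : p1 ≠ p2) (h13 : p1 ≠ p3) (h23 : p2 ≠ p3) :
    ¬ Collinear ℝ ({p1, p2, p3} : Set _) :=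
  affineIndependent_iff_not_collinear_set.mp
    (hs.affineIndependent_of_mem_of_ne h1 h2 h3 h12 h13 h23)

omit [FiniteDimensional ℝ E] in
private lemma miquel_collinear_of_combo {p1 p2 p3 : E} {t : ℝ}
    (h : p3 - p1 = t • (p2 - p1)) : Collinear ℝ ({p1, p2, p3} : Set _) := by
  rw [collinear_iff_of_mem (Set.mem_insert p1 {p2, p3})]
  refine ⟨p2 - p1, ?_⟩
  intro p hp
  simp only [Set.mem_insert_iff, Set.mem_singleton_iff] at hp
  rcases hp with rfl | rfl | rfl
  · exact ⟨0, by simp⟩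
  · exact ⟨1, by simp⟩
  · refine ⟨t, ?_⟩
    have := sub_eq_iff_eq_add.mp h
    rw [this]
    simp

private lemma miquel_finrank_span_le_two {v1 v2 v3 : EuclideanSpace ℝ (Fin 3)}
    (h : ¬ LinearIndependent ℝ ![v1, v2, v3]) :
    Module.finrank ℝ (Submodule.span ℝ ({v1, v2, v3} : Set (EuclideanSpace ℝ (Fin 3)))) ≤ 2 := by
  by_contra h3
  push_neg at h3
  apply h
  rw [linearIndependent_iff_card_eq_finrank_span]
  have hr : Set.range ![v1, v2, v3] = {v1, v2, v3} := by
    ext x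
    constructor
    · rintro ⟨i, rfl⟩
      fin_cases i <;> simp
    · intro hx
      rcases hx with rfl | hx
      · exact ⟨0, rfl⟩
      rcases hx with rfl | hx
      · exact ⟨1, rfl⟩
      rw [Set.mem_singleton_iff] at hx
      exact ⟨2, hx.symm ▸ rfl⟩
  rw [Set.finrank, hr]
  have hle : Module.finrank ℝ
      (Submodule.span ℝ ({v1, v2, v3} : Set (EuclideanSpace ℝ (Fin 3)))) ≤ 3 := by
    have := Submodule.finrank_le (Submodule.span ℝ ({v1, v2, v3} : Set (EuclideanSpace ℝ (Fin 3))))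
    simpa using this
  simp only [Fintype.card_fin]
  omega

end MiquelAux

set_option maxHeartbeats 1000000 in
/-- Miquel's theorem for the cube. -/
theorem miquel_cube
    (x000 x100 x010 x001 x110 x101 x011 x111 : EuclideanSpace ℝ (Fin 3))
    (hdist : List.Pairwise (· ≠ ·) [x000, x100, x010, x001, x110, x101, x011])
    (hncop : ¬ Coplanar ℝ ({x000, x100, x010, x001, x110, x101, x011} :
      Set (EuclideanSpace ℝ (Fin 3))))
    (hf₁ : Concyclic ({x000, x100, x110, x010} : Set (EuclideanSpace ℝ (Fin 3))))
    (hf₂ : Concyclic ({x000, x100, x101, x001} : Set (EuclideanSpace ℝ (Fin 3))))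
    (hf₃ : Concyclic ({x000, x010, x011, x001} : Set (EuclideanSpace ℝ (Fin 3))))
    (hp₁ : Coplanar ℝ ({x100, x110, x111, x101} : Set (EuclideanSpace ℝ (Fin 3))))
    (hp₂ : Coplanar ℝ ({x010, x110, x111, x011} : Set (EuclideanSpace ℝ (Fin 3))))
    (hp₃ : Coplanar ℝ ({x001, x101, x111, x011} : Set (EuclideanSpace ℝ (Fin 3))))
    (hcommon : ∃! p : EuclideanSpace ℝ (Fin 3),
      p ∈ affineSpan ℝ ({x100, x110, x101} : Set (EuclideanSpace ℝ (Fin 3))) ∧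
      p ∈ affineSpan ℝ ({x010, x110, x011} : Set (EuclideanSpace ℝ (Fin 3))) ∧
      p ∈ affineSpan ℝ ({x001, x101, x011} : Set (EuclideanSpace ℝ (Fin 3)))) :
    Concyclic ({x100, x110, x111, x101} : Set (EuclideanSpace ℝ (Fin 3))) ∧
      Concyclic ({x010, x110, x111, x011} : Set (EuclideanSpace ℝ (Fin 3))) ∧
      Concyclic ({x001, x101, x111, x011} : Set (EuclideanSpace ℝ (Fin 3))) := by
  clear hcommon
  -- distinctness
  simp only [List.pairwise_cons, List.mem_cons, List.not_mem_nil, or_false,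
    List.mem_singleton, forall_eq_or_imp, forall_eq, List.Pairwise.nil, and_true] at hdist
  obtain ⟨⟨n01, n02, n03, n04, n05, n06⟩, ⟨n12, n13, n14, n15, n16⟩,
    ⟨n23, n24, n25, n26⟩, ⟨n34, n35, n36⟩, ⟨n45, n46⟩, n56, -⟩ := hdist
  -- noncollinearity of triples on the faces at x000
  have ncl₁ : ¬ Collinear ℝ ({x000, x100, x010} : Set _) :=
    miquel_ncol hf₁.1 (by simp) (by simp) (by simp) n01 n02 n12
  have ncl₂ : ¬ Collinear ℝ ({x000, x100, x001} : Set _) :=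
    miquel_ncol hf₂.1 (by simp) (by simp) (by simp) n01 n03 n13
  have ncl₃ : ¬ Collinear ℝ ({x000, x010, x001} : Set _) :=
    miquel_ncol hf₃.1 (by simp) (by simp) (by simp) n02 n03 n23
  have ncl4 : ¬ Collinear ℝ ({x000, x100, x110} : Set _) :=
    miquel_ncol hf₁.1 (by simp) (by simp) (by simp) n01 n04 n14
  have ncl5 : ¬ Collinear ℝ ({x000, x010, x110} : Set _) :=
    miquel_ncol hf₁.1 (by simp) (by simp) (by simp) n02 n04 n24
  have ncl6 : ¬ Collinear ℝ ({x000, x100, x101} : Set _) :=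
    miquel_ncol hf₂.1 (by simp) (by simp) (by simp) n01 n05 n15
  have ncl7 : ¬ Collinear ℝ ({x000, x001, x101} : Set _) :=
    miquel_ncol hf₂.1 (by simp) (by simp) (by simp) n03 n05 n35
  have ncl8 : ¬ Collinear ℝ ({x000, x010, x011} : Set _) :=
    miquel_ncol hf₃.1 (by simp) (by simp) (by simp) n02 n06 n26
  have ncl9 : ¬ Collinear ℝ ({x000, x001, x011} : Set _) :=
    miquel_ncol hf₃.1 (by simp) (by simp) (by simp) n03 n06 n36
  -- coordinates of x110, x101, x011 with respect to x000,x100,x010,x001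
  have hcp110 : Coplanar ℝ ({x000, x100, x010, x110} : Set _) :=
    hf₁.2.subset (by intro y hy; simp at hy ⊢; tauto)
  obtain ⟨a, b, hv110⟩ := miquel_coplanar_extract hcp110 ncl₁
  have hcp101 : Coplanar ℝ ({x000, x100, x001, x101} : Set _) :=
    hf₂.2.subset (by intro y hy; simp at hy ⊢; tauto)
  obtain ⟨c, d, hv101⟩ := miquel_coplanar_extract hcp101 ncl₂
  have hcp011 : Coplanar ℝ ({x000, x010, x001, x011} : Set _) :=
    hf₃.2.subset (by intro y hy; simp at hy ⊢; tauto)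
  obtain ⟨e, f, hv011⟩ := miquel_coplanar_extract hcp011 ncl₃
  -- nondegeneracy of the coordinates
  have ha : a ≠ 0 := by
    intro h
    apply ncl5
    apply miquel_collinear_of_combo (t := b)
    rw [hv110, h]; simp
  have hb : b ≠ 0 := by
    intro h
    apply ncl4
    apply miquel_collinear_of_combo (t := a)
    rw [hv110, h]; simp
  have hc : c ≠ 0 := by
    intro h
    apply ncl7
    apply miquel_collinear_of_combo (t := d)
    rw [hv101, h]; simp
  have hd : d ≠ 0 := by
    intro h
    apply ncl6
    apply miquel_collinear_of_combo (t := c)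
    rw [hv101, h]; simp
  have he : e ≠ 0 := by
    intro h
    apply ncl9
    apply miquel_collinear_of_combo (t := f)
    rw [hv011, h]; simp
  have hf : f ≠ 0 := by
    intro h
    apply ncl8
    apply miquel_collinear_of_combo (t := e)
    rw [hv011, h]; simp
  -- the four base points are affinely independent
  have h4cop : ¬ Coplanar ℝ ({x000, x100, x010, x001} : Set _) := by
    intro hc4
    apply hncop
    have m000 : x000 ∈ affineSpan ℝ ({x000, x100, x010, x001} : Set _) :=
      subset_affineSpan ℝ _ (by simp)
    have m100 : x100 ∈ affineSpan ℝ ({x000, x100, x010, x001} : Set _) :=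
      subset_affineSpan ℝ _ (by simp)
    have m010 : x010 ∈ affineSpan ℝ ({x000, x100, x010, x001} : Set _) :=
      subset_affineSpan ℝ _ (by simp)
    have m001 : x001 ∈ affineSpan ℝ ({x000, x100, x010, x001} : Set _) :=
      subset_affineSpan ℝ _ (by simp)
    have hvmem : ∀ y : EuclideanSpace ℝ (Fin 3), y ∈ ({x100, x010, x001} : Set _) →
        y - x000 ∈ (affineSpan ℝ ({x000, x100, x010, x001} : Set _)).direction := by
      intro y hy
      rw [direction_affineSpan]
      have := vsub_mem_vectorSpan ℝ
        (show y ∈ ({x000, x100, x010, x001} : Set _) by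
          simp only [Set.mem_insert_iff, Set.mem_singleton_iff] at hy ⊢; tauto)
        (show x000 ∈ ({x000, x100, x010, x001} : Set _) by simp)
      simpa [vsub_eq_sub] using this
    have hmem : ∀ y : EuclideanSpace ℝ (Fin 3),
        y - x000 ∈ (affineSpan ℝ ({x000, x100, x010, x001} : Set _)).direction →
        y ∈ affineSpan ℝ ({x000, x100, x010, x001} : Set _) := by
      intro y hy
      have := AffineSubspace.vadd_mem_of_mem_direction hy m000
      simpa [vadd_eq_add, sub_add_cancel] using this
    have m110 : x110 ∈ affineSpan ℝ ({x000, x100, x010, x001} : Set _) := by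
      apply hmem
      rw [hv110]
      exact Submodule.add_mem _
        (Submodule.smul_mem _ _ (hvmem x100 (by simp)))
        (Submodule.smul_mem _ _ (hvmem x010 (by simp)))
    have m101 : x101 ∈ affineSpan ℝ ({x000, x100, x010, x001} : Set _) := by
      apply hmem
      rw [hv101]
      exact Submodule.add_mem _
        (Submodule.smul_mem _ _ (hvmem x100 (by simp)))
        (Submodule.smul_mem _ _ (hvmem x001 (by simp)))
    have m011 : x011 ∈ affineSpan ℝ ({x000, x100, x010, x001} : Set _) := by
      apply hmem
      rw [hv011]
      exact Submodule.add_mem _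
        (Submodule.smul_mem _ _ (hvmem x010 (by simp)))
        (Submodule.smul_mem _ _ (hvmem x001 (by simp)))
    have hsub7 : ({x000, x100, x010, x001, x110, x101, x011} : Set _) ⊆
        (affineSpan ℝ ({x000, x100, x010, x001} : Set _) : Set (EuclideanSpace ℝ (Fin 3))) := by
      intro y hy
      simp only [Set.mem_insert_iff, Set.mem_singleton_iff] at hy
      rcases hy with rfl | rfl | rfl | rfl | rfl | rfl | rfl
      exacts [m000, m100, m010, m001, m110, m101, m011]
    rw [coplanar_iff_finrank_le_two] at hc4 ⊢
    refine le_trans (Submodule.finrank_mono ?_) hc4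
    calc vectorSpan ℝ ({x000, x100, x010, x001, x110, x101, x011} : Set _)
        ≤ vectorSpan ℝ ((affineSpan ℝ ({x000, x100, x010, x001} : Set _) :
            Set (EuclideanSpace ℝ (Fin 3)))) := vectorSpan_mono ℝ hsub7
      _ = (affineSpan ℝ ({x000, x100, x010, x001} : Set _)).direction :=
            (AffineSubspace.direction_eq_vectorSpan _).symm
      _ = vectorSpan ℝ ({x000, x100, x010, x001} : Set _) := direction_affineSpan ℝ _
  have hli3 : LinearIndependent ℝ ![x100 - x000, x010 - x000, x001 - x000] := by
    by_contra hnli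
    apply h4cop
    rw [coplanar_iff_finrank_le_two, miquel_vectorSpan_quad]
    exact miquel_finrank_span_le_two hnli
  have h4 : AffineIndependent ℝ ![x000, x100, x010, x001] := by
    rw [affineIndependent_iff_linearIndependent_vsub ℝ _ 0]
    have g : {x : Fin 4 // x ≠ 0} → Fin 3 := fun i => Fin.pred i.1 i.2
    have hginj : Function.Injective (fun i : {x : Fin 4 // x ≠ 0} => Fin.pred i.1 i.2) := by
      intro i j hij
      exact Subtype.ext ((Fin.pred_inj (ha := i.2) (hb := j.2)).mp hij)
    have hkey : (fun i : {x : Fin 4 // x ≠ 0} =>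
        (![x000, x100, x010, x001] : Fin 4 → EuclideanSpace ℝ (Fin 3)) ↑i -ᵥ
          ![x000, x100, x010, x001] 0)
        = ![x100 - x000, x010 - x000, x001 - x000] ∘
            (fun i : {x : Fin 4 // x ≠ 0} => Fin.pred i.1 i.2) := by
      funext i
      obtain ⟨i, hi⟩ := i
      fin_cases i
      · exact absurd rfl hi
      · rfl
      · rfl
      · rfl
    rw [hkey]
    exact hli3.comp _ hginj
  -- circumsphere of the four base points
  obtain ⟨o, r, hd000, hd100, hd010, hd001⟩ :
      ∃ (o : EuclideanSpace ℝ (Fin 3)) (r : ℝ), dist x000 o = r ∧ dist x100 o = r ∧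
        dist x010 o = r ∧ dist x001 o = r := by
    let T : Affine.Simplex ℝ (EuclideanSpace ℝ (Fin 3)) 3 := ⟨![x000, x100, x010, x001], h4⟩
    refine ⟨T.circumcenter, T.circumradius, ?_, ?_, ?_, ?_⟩
    · simpa [T] using T.dist_circumcenter_eq_circumradius 0
    · simpa [T] using T.dist_circumcenter_eq_circumradius 1
    · simpa [T] using T.dist_circumcenter_eq_circumradius 2
    · simpa [T] using T.dist_circumcenter_eq_circumradius 3
  -- the other three known vertices lie on the circumsphere
  have hd110 : dist x110 o = r :=
    miquel_cospherical_transfer (hf₁.1.subset (by intro y hy; simp at hy ⊢; tauto))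
      hv110 hd000 hd100 hd010
  have hd101 : dist x101 o = r :=
    miquel_cospherical_transfer (hf₂.1.subset (by intro y hy; simp at hy ⊢; tauto))
      hv101 hd000 hd100 hd001
  have hd011 : dist x011 o = r :=
    miquel_cospherical_transfer (hf₃.1.subset (by intro y hy; simp at hy ⊢; tauto))
      hv011 hd000 hd010 hd001
  -- x111 as affine combinations on each of its three faces
  have hcoP1 : Cospherical ({x100, x110, x101} : Set _) :=
    ⟨o, r, by intro y hy; simp at hy; rcases hy with rfl | rfl | rfl <;> assumption⟩
  have hcoP2 : Cospherical ({x010, x110, x011} : Set _) :=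
    ⟨o, r, by intro y hy; simp at hy; rcases hy with rfl | rfl | rfl <;> assumption⟩
  have hcoP3 : Cospherical ({x001, x101, x011} : Set _) :=
    ⟨o, r, by intro y hy; simp at hy; rcases hy with rfl | rfl | rfl <;> assumption⟩
  have nclP1 : ¬ Collinear ℝ ({x100, x110, x101} : Set _) :=
    miquel_ncol hcoP1 (by simp) (by simp) (by simp) n14 n15 n45
  have nclP2 : ¬ Collinear ℝ ({x010, x110, x011} : Set _) :=
    miquel_ncol hcoP2 (by simp) (by simp) (by simp) n24 n26 n46
  have nclP3 : ¬ Collinear ℝ ({x001, x101, x011} : Set _) :=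
    miquel_ncol hcoP3 (by simp) (by simp) (by simp) n35 n36 n56
  obtain ⟨sa, ta, hva⟩ := miquel_coplanar_extract
    (hp₁.subset (by intro y hy; simp at hy ⊢; tauto) :
      Coplanar ℝ ({x100, x110, x101, x111} : Set _)) nclP1
  obtain ⟨sb, tb, hvb⟩ := miquel_coplanar_extract
    (hp₂.subset (by intro y hy; simp at hy ⊢; tauto) :
      Coplanar ℝ ({x010, x110, x011, x111} : Set _)) nclP2
  obtain ⟨sc, tc, hvc⟩ := miquel_coplanar_extract
    (hp₃.subset (by intro y hy; simp at hy ⊢; tauto) :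
      Coplanar ℝ ({x001, x101, x011, x111} : Set _)) nclP3
  -- three representations of x111 - o in the base frame
  have hrepa : x111 - o = (1 + sa*(a-1) + ta*(c-1)) • (x100 - x000) + (sa*b) • (x010 - x000)
      + (ta*d) • (x001 - x000) + (x000 - o) := by
    linear_combination (norm := module) hva + sa • hv110 + ta • hv101
  have hrepb : x111 - o = (sb*a) • (x100 - x000) + (1 + sb*(b-1) + tb*(e-1)) • (x010 - x000)
      + (tb*f) • (x001 - x000) + (x000 - o) := by
    linear_combination (norm := module) hvb + sb • hv110 + tb • hv011
  have hrepc : x111 - o = (sc*c) • (x100 - x000) + (tc*e) • (x010 - x000)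
      + (1 + sc*(d-1) + tc*(f-1)) • (x001 - x000) + (x000 - o) := by
    linear_combination (norm := module) hvc + sc • hv101 + tc • hv011
  -- extract scalar coordinate equations
  have hzb : ((1 + sa*(a-1) + ta*(c-1)) - sb*a) • (x100 - x000)
      + ((sa*b) - (1 + sb*(b-1) + tb*(e-1))) • (x010 - x000)
      + ((ta*d) - tb*f) • (x001 - x000) = 0 := by
    linear_combination (norm := module) hrepb - hrepa
  have hzc : ((1 + sa*(a-1) + ta*(c-1)) - sc*c) • (x100 - x000)
      + ((sa*b) - tc*e) • (x010 - x000)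
      + ((ta*d) - (1 + sc*(d-1) + tc*(f-1))) • (x001 - x000) = 0 := by
    linear_combination (norm := module) hrepc - hrepa
  have hGb := Fintype.linearIndependent_iff.mp hli3
    ![(1 + sa*(a-1) + ta*(c-1)) - sb*a, (sa*b) - (1 + sb*(b-1) + tb*(e-1)), (ta*d) - tb*f]
    (by simpa [Fin.sum_univ_three] using hzb)
  have hGc := Fintype.linearIndependent_iff.mp hli3
    ![(1 + sa*(a-1) + ta*(c-1)) - sc*c, (sa*b) - tc*e, (ta*d) - (1 + sc*(d-1) + tc*(f-1))]
    (by simpa [Fin.sum_univ_three] using hzc)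
  have hG1 : (1 + sa*(a-1) + ta*(c-1)) - sb*a = 0 := by simpa using hGb 0
  have hG2 : (sa*b) - (1 + sb*(b-1) + tb*(e-1)) = 0 := by simpa using hGb 1
  have hG3 : (ta*d) - tb*f = 0 := by simpa using hGb 2
  have hG4 : (1 + sa*(a-1) + ta*(c-1)) - sc*c = 0 := by simpa using hGc 0
  have hG5 : (sa*b) - tc*e = 0 := by simpa using hGc 1
  have hG6 : (ta*d) - (1 + sc*(d-1) + tc*(f-1)) = 0 := by simpa using hGc 2
  -- scalar sphere equations
  have hI0 : ⟪x000 - o, x000 - o⟫ = r^2 := miquel_inner_self_of_dist hd000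
  have hI1 : ⟪(x100 - x000) + (x000 - o), (x100 - x000) + (x000 - o)⟫ = r^2 := by
    rw [show (x100 - x000) + (x000 - o) = x100 - o by abel]
    exact miquel_inner_self_of_dist hd100
  have hI2 : ⟪(x010 - x000) + (x000 - o), (x010 - x000) + (x000 - o)⟫ = r^2 := by
    rw [show (x010 - x000) + (x000 - o) = x010 - o by abel]
    exact miquel_inner_self_of_dist hd010
  have hI3 : ⟪(x001 - x000) + (x000 - o), (x001 - x000) + (x000 - o)⟫ = r^2 := by
    rw [show (x001 - x000) + (x000 - o) = x001 - o by abel]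
    exact miquel_inner_self_of_dist hd001
  have hre4 : x110 - o = a • (x100 - x000) + b • (x010 - x000) + (x000 - o) := by
    linear_combination (norm := module) hv110
  have hre5 : x101 - o = c • (x100 - x000) + d • (x001 - x000) + (x000 - o) := by
    linear_combination (norm := module) hv101
  have hre6 : x011 - o = e • (x010 - x000) + f • (x001 - x000) + (x000 - o) := by
    linear_combination (norm := module) hv011
  have hI4 : ⟪a • (x100 - x000) + b • (x010 - x000) + (x000 - o),
      a • (x100 - x000) + b • (x010 - x000) + (x000 - o)⟫ = r^2 := by
    rw [← hre4]; exact miquel_inner_self_of_dist hd110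
  have hI5 : ⟪c • (x100 - x000) + d • (x001 - x000) + (x000 - o),
      c • (x100 - x000) + d • (x001 - x000) + (x000 - o)⟫ = r^2 := by
    rw [← hre5]; exact miquel_inner_self_of_dist hd101
  have hI6 : ⟪e • (x010 - x000) + f • (x001 - x000) + (x000 - o),
      e • (x010 - x000) + f • (x001 - x000) + (x000 - o)⟫ = r^2 := by
    rw [← hre6]; exact miquel_inner_self_of_dist hd011
  -- x111 lies on the circumsphere
  have hr0 : 0 ≤ r := hd000 ▸ dist_nonneg
  have habcdef : a*b*c*d*e*f ≠ 0 := by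
    exact mul_ne_zero (mul_ne_zero (mul_ne_zero (mul_ne_zero (mul_ne_zero ha hb) hc) hd) he) hf
  have hd111 : dist x111 o = r := by
    apply miquel_dist_eq_of_inner_self hr0
    rw [hrepa]
    simp only [inner_add_left, inner_add_right, real_inner_smul_left,
      real_inner_smul_right] at hI1 hI2 hI3 hI4 hI5 hI6 ⊢
    simp only [real_inner_comm (x010 - x000) (x100 - x000),
      real_inner_comm (x001 - x000) (x100 - x000),
      real_inner_comm (x001 - x000) (x010 - x000),
      real_inner_comm (x000 - o) (x100 - x000),
      real_inner_comm (x000 - o) (x010 - x000),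
      real_inner_comm (x000 - o) (x001 - x000)] at hI1 hI2 hI3 hI4 hI5 hI6 ⊢
    apply mul_left_cancel₀ habcdef
    linear_combination (a*b*c*d*e*f - (a*b*c*d*e*f*(1 + sa*(a-1) + ta*(c-1)) - c*d*e*f*(1 + sa*(a-1) + ta*(c-1))*(sa*b)*a - a*b*e*f*(1 + sa*(a-1) + ta*(c-1))*(ta*d)*c) - (a*b*c*d*e*f*(sa*b) - c*d*e*f*(1 + sa*(a-1) + ta*(c-1))*(sa*b)*b - a*b*c*d*(sa*b)*(ta*d)*e) - (a*b*c*d*e*f*(ta*d) - a*b*e*f*(1 + sa*(a-1) + ta*(c-1))*(ta*d)*d - a*b*c*d*(sa*b)*(ta*d)*f) - (c*d*e*f*(1 + sa*(a-1) + ta*(c-1))*(sa*b)) - (a*b*e*f*(1 + sa*(a-1) + ta*(c-1))*(ta*d)) - (a*b*c*d*(sa*b)*(ta*d))) * hI0 + (a*b*c*d*e*f*(1 + sa*(a-1) + ta*(c-1)) - c*d*e*f*(1 + sa*(a-1) + ta*(c-1))*(sa*b)*a - a*b*e*f*(1 + sa*(a-1) + ta*(c-1))*(ta*d)*c) * hI1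 + (a*b*c*d*e*f*(sa*b) - c*d*e*f*(1 + sa*(a-1) + ta*(c-1))*(sa*b)*b - a*b*c*d*(sa*b)*(ta*d)*e) * hI2 + (a*b*c*d*e*f*(ta*d) - a*b*e*f*(1 + sa*(a-1) + ta*(c-1))*(ta*d)*d - a*b*c*d*(sa*b)*(ta*d)*f) * hI3 + (c*d*e*f*(1 + sa*(a-1) + ta*(c-1))*(sa*b)) * hI4 + (a*b*e*f*(1 + sa*(a-1) + ta*(c-1))*(ta*d)) * hI5
      + (a*b*c*d*(sa*b)*(ta*d)) * hI6 + (-(b*c*d*e*⟪x010 - x000, x010 - x000⟫*((sa*b))*f*(b-1))) * hG1 + (b*c*d*e*⟪x010 - x000, x010 - x000⟫*((sa*b))*a*f) * hG2 + (-(b*c*d*e*⟪x010 - x000, x010 - x000⟫*((sa*b))*a*(e-1))) * hG3 + (-(a*b*d*f*⟪x001 - x000, x001 - x000⟫*((ta*d))*e*(d-1))) * hG4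
      + (-(a*b*d*f*⟪x001 - x000, x001 - x000⟫*((ta*d))*c*(f-1))) * hG5 + (a*b*d*f*⟪x001 - x000, x001 - x000⟫*((ta*d))*c*e) * hG6
  -- assemble the conclusion
  refine ⟨⟨⟨o, r, ?_⟩, hp₁⟩, ⟨⟨o, r, ?_⟩, hp₂⟩, ⟨⟨o, r, ?_⟩, hp₃⟩⟩
  · intro y hy; simp at hy; rcases hy with rfl | rfl | rfl | rfl <;> assumption
  · intro y hy; simp at hy; rcases hy with rfl | rfl | rfl | rfl <;> assumption
  · intro y hy; simp at hy; rcases hy with rfl | rfl | rfl | rfl <;> assumption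
end

section
/- (Closedness of the dual form on a kite) Let a, b, c, d ∈ Quaternion ℝ be nonzero purely imaginary quaternions with a + b + c + d = 0 (the oriented edges of a closed quadrilateral) whose quaternionic cross-ratio equals −1, i.e. a * b⁻¹ * c * d⁻¹ = −1 (the quadrilateral is a conformal square). Then the dual edges with alternating signs close up: a/‖a‖² − b/‖b‖² + c/‖c‖² − d/‖d‖² = 0; equivalently a⁻¹ + c⁻¹ = b⁻¹ + d⁻¹. -/
/-!
Write `d = -(a + b + c)`. The cross-ratio condition says `a * b⁻¹ * c = -d`. Conjugating, and
using that `a, b, c, d` are purely imaginary (`star x = -x`), also `c * b⁻¹ * a = -d`, so that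
`d⁻¹ = -a⁻¹ * b * c⁻¹`. Then
`a⁻¹ + c⁻¹ = a⁻¹ * (a + c) * c⁻¹ = -a⁻¹ * (b + d) * c⁻¹ = d⁻¹ + a⁻¹ * (a * b⁻¹ * c) * c⁻¹ = d⁻¹ + b⁻¹`.
Finally `x / ‖x‖² = -x⁻¹` for purely imaginary `x`, which turns this into the first claim.
-/

section DivisionRing

variable {R : Type*} [DivisionRing R]

theorem inv_add_inv_eq_of_mul_inv_mul_eq_neg {a b c d : R} (ha : a ≠ 0) (hc : c ≠ 0)
    (hsum : a + b + c + d = 0) (habc : a * b⁻¹ * c = -d) (hcba : c * b⁻¹ * a = -d) :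
    a⁻¹ + c⁻¹ = b⁻¹ + d⁻¹ := by
  have hac : a + c = -b - d := by rw [← sub_eq_zero, ← hsum]; abel
  have hd_inv : d⁻¹ = -(a⁻¹ * b * c⁻¹) := by
    rw [← neg_neg d, ← hcba, inv_neg, mul_inv_rev, mul_inv_rev, inv_inv, mul_assoc]
  calc a⁻¹ + c⁻¹ = a⁻¹ * (a + c) * c⁻¹ := inv_add_inv' ha hc
    _ = a⁻¹ * (-d) * c⁻¹ - a⁻¹ * b * c⁻¹ := by rw [hac]; noncomm_ring
    _ = b⁻¹ + d⁻¹ := by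
      rw [hd_inv, ← habc, mul_assoc a, inv_mul_cancel_left₀ ha, mul_inv_cancel_right₀ hc]
      abel

variable [StarRing R]

theorem mul_inv_mul_comm_of_star_eq_neg {a b c : R} (ha : star a = -a) (hb : star b = -b)
    (hc : star c = -c) (habc : star (a * b⁻¹ * c) = -(a * b⁻¹ * c)) :
    c * b⁻¹ * a = a * b⁻¹ * c := by
  rw [star_mul, star_mul, star_inv₀, ha, hb, hc, inv_neg] at habc
  simpa only [neg_mul, mul_neg, neg_neg, neg_inj, mul_assoc] using habc

end DivisionRing

theorem Quaternion.inv_norm_sq_smul_of_re_eq_zero {x : Quaternion ℝ} (hx : x.re = 0) :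
    (‖x‖ ^ 2)⁻¹ • x = -x⁻¹ := by
  rw [Quaternion.inv_def, Quaternion.star_eq_neg.2 hx, Quaternion.normSq_eq_norm_mul_self, sq,
    smul_neg, neg_neg]

theorem dual_form_closed_on_conformal_square_general
    (a b c d : Quaternion ℝ)
    (ha : a.re = 0) (hb : b.re = 0) (hc : c.re = 0) (hd : d.re = 0)
    (ha0 : a ≠ 0) (hc0 : c ≠ 0) (hd0 : d ≠ 0)
    (hclosed : a + b + c + d = 0)
    (hcr : a * b⁻¹ * c * d⁻¹ = -1) :
    (‖a‖ ^ 2)⁻¹ • a - (‖b‖ ^ 2)⁻¹ • b + (‖c‖ ^ 2)⁻¹ • c - (‖d‖ ^ 2)⁻¹ • d = 0 ∧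
      a⁻¹ + c⁻¹ = b⁻¹ + d⁻¹ := by
  have habc : a * b⁻¹ * c = -d := by
    simpa only [neg_one_mul] using (mul_inv_eq_iff_eq_mul₀ hd0).1 hcr
  have hcba : c * b⁻¹ * a = -d := by
    refine (mul_inv_mul_comm_of_star_eq_neg (Quaternion.star_eq_neg.2 ha)
      (Quaternion.star_eq_neg.2 hb) (Quaternion.star_eq_neg.2 hc) ?_).trans habc
    rw [habc, star_neg, Quaternion.star_eq_neg.2 hd]
  have key := inv_add_inv_eq_of_mul_inv_mul_eq_neg ha0 hc0 hclosed habc hcba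
  refine ⟨?_, key⟩
  simp only [Quaternion.inv_norm_sq_smul_of_re_eq_zero, ha, hb, hc, hd]
  calc -a⁻¹ - -b⁻¹ + -c⁻¹ - -d⁻¹ = (b⁻¹ + d⁻¹) - (a⁻¹ + c⁻¹) := by abel
    _ = 0 := by rw [key, sub_self]

/-- Closedness of the dual discrete one-form on a conformal square: if the
oriented edges `a, b, c, d` of a closed quadrilateral are nonzero purely
imaginary quaternions whose cross-ratio `a * b⁻¹ * c * d⁻¹` equals `−1`, then
the dual edges with alternating signs close up. -/
theorem dual_form_closed_on_conformal_square
    (a b c d : Quaternion ℝ)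
    (ha : a.re = 0) (hb : b.re = 0) (hc : c.re = 0) (hd : d.re = 0)
    (ha0 : a ≠ 0) (hb0 : b ≠ 0) (hc0 : c ≠ 0) (hd0 : d ≠ 0)
    (hclosed : a + b + c + d = 0)
    (hcr : a * b⁻¹ * c * d⁻¹ = -1) :
    (‖a‖ ^ 2)⁻¹ • a - (‖b‖ ^ 2)⁻¹ • b + (‖c‖ ^ 2)⁻¹ • c - (‖d‖ ^ 2)⁻¹ • d = 0 ∧
      a⁻¹ + c⁻¹ = b⁻¹ + d⁻¹ :=
  dual_form_closed_on_conformal_square_general a b c d ha hb hc hd ha0 hc0 hd0 hclosed hcr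
end
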